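/- arXiv:1410.0195 — 9 statements merged into one kernel-verified Lean document; each statement's English description precedes it below -/
import Mathlib

section
/- In any rank-two root subsystem Ψ of a finite crystallographic root system Φ, the set of positive roots Ψ⁺ = Ψ ∩ Φ⁺ contains at most one pair of elements that are incomparable in the root poset on Φ⁺, and if such a pair exists, its two elements are minimal among all elements of Ψ⁺. -/
/-!
Let `Ψ⁺` be the set of positive roots in the plane `U`. It is finite and lies in the half-plane
where the height is positive, so it lies in the cone spanned by its two extreme elements `η₁, η₂`.
Descending along `ψ - ηᵢ` (one of `⟪η₁, ψ⟫`, `⟪η₂, ψ⟫` is positive) shows that every element of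
`Ψ⁺` is `m η₁ + k η₂` with `m, k ∈ ℕ`. Hence every element other than `η₁, η₂` lies above both,
and it remains to exclude two crossing roots `m η₁ + k η₂`, `m' η₁ + k' η₂` with `m < m'`,
`k' < k` other than `η₂, η₁`. Their inner product is `≤ 0` (otherwise their difference would be a
root with coefficients of both signs), and the reflections of the first in `η₂` and of the second
in `η₁` are positive roots; as the product of the two Cartan integers of `η₁, η₂` is at most `3`,
these conditions have no integer solution.
-/

open scoped RealInnerProductSpace

/-- A finite crystallographic (reduced) root system in a Euclidean space `V`. -/
structure RootSystemData (V : Type*) [NormedAddCommGroup V] [InnerProductSpace ℝ V] where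
  Φ : Set V
  finite : Φ.Finite
  nonzero : ∀ γ ∈ Φ, γ ≠ 0
  neg_mem : ∀ γ ∈ Φ, -γ ∈ Φ
  reflect_mem : ∀ α ∈ Φ, ∀ β ∈ Φ, β - (2 * ⟪α, β⟫ / ⟪α, α⟫) • α ∈ Φ
  crystallographic : ∀ α ∈ Φ, ∀ β ∈ Φ, ∃ n : ℤ, 2 * ⟪α, β⟫ / ⟪α, α⟫ = (n : ℝ)
  reduced : ∀ γ ∈ Φ, ∀ t : ℝ, t • γ ∈ Φ → t = 1 ∨ t = -1

/-- A base (system of simple roots) for a root system: the simple roots form a basis of `V`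
and every root has coordinates that are all nonnegative integers or all nonpositive integers. -/
structure RootBase {V : Type*} [NormedAddCommGroup V] [InnerProductSpace ℝ V]
    (R : RootSystemData V) (ι : Type*) [Fintype ι] where
  b : Module.Basis ι ℝ V
  simple_mem : ∀ i, b i ∈ R.Φ
  coord_sign : ∀ γ ∈ R.Φ, (∀ i, 0 ≤ b.repr γ i) ∨ (∀ i, b.repr γ i ≤ 0)
  coord_int : ∀ γ ∈ R.Φ, ∀ i, ∃ n : ℤ, b.repr γ i = (n : ℝ)

namespace RootBase

variable {V : Type*} [NormedAddCommGroup V] [InnerProductSpace ℝ V]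
  {R : RootSystemData V} {ι : Type*} [Fintype ι]

/-- `γ` is a positive root. -/
def IsPos (B : RootBase R ι) (γ : V) : Prop := γ ∈ R.Φ ∧ ∀ i, 0 ≤ B.b.repr γ i

/-- The set of positive roots. -/
def Pos (B : RootBase R ι) : Set V := {γ | B.IsPos γ}

/-- The root poset order: coordinatewise comparison over the simple roots. -/
def rle (B : RootBase R ι) (γ γ' : V) : Prop := ∀ i, B.b.repr γ i ≤ B.b.repr γ' i

end RootBase

/-- All roots have the same length. -/
def RootSystemData.SimplyLaced {V : Type*} [NormedAddCommGroup V] [InnerProductSpace ℝ V]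
    (R : RootSystemData V) : Prop := ∀ γ ∈ R.Φ, ∀ γ' ∈ R.Φ, ⟪γ, γ⟫ = ⟪γ', γ'⟫

section InnerProduct

variable {V : Type*} [NormedAddCommGroup V] [InnerProductSpace ℝ V]

theorem real_inner_sq_lt_of_linearIndependent {u v : V} (h : LinearIndependent ℝ ![u, v]) :
    ⟪u, v⟫ ^ 2 < ⟪u, u⟫ * ⟪v, v⟫ := by
  have hu : u ≠ 0 := by simpa using h.ne_zero 0
  have hu' : 0 < ⟪u, u⟫ := real_inner_self_pos.mpr hu
  have hperp : 0 < ⟪v - (⟪u, v⟫ / ⟪u, u⟫) • u, v - (⟪u, v⟫ / ⟪u, u⟫) • u⟫ :=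
    real_inner_self_pos.mpr (sub_ne_zero.mpr ((LinearIndependent.pair_iff' hu).mp h _).symm)
  have hexp : ⟪v - (⟪u, v⟫ / ⟪u, u⟫) • u, v - (⟪u, v⟫ / ⟪u, u⟫) • u⟫
      = (⟪u, u⟫ * ⟪v, v⟫ - ⟪u, v⟫ ^ 2) / ⟪u, u⟫ := by
    simp only [inner_sub_left, inner_sub_right, real_inner_smul_left, real_inner_smul_right,
      real_inner_comm v u]
    field_simp
    ring
  rw [hexp] at hperp
  linarith [(div_pos_iff_of_pos_right hu').mp hperp]

theorem inner_pos_or_inner_pos_of_nonneg {u v : V} {a b : ℝ} (ha : 0 ≤ a) (hb : 0 ≤ b)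
    (hx : a • u + b • v ≠ 0) : 0 < ⟪u, a • u + b • v⟫ ∨ 0 < ⟪v, a • u + b • v⟫ := by
  by_contra! h
  have hself := real_inner_self_pos.mpr hx
  rw [inner_add_left, real_inner_smul_left, real_inner_smul_left] at hself
  nlinarith [mul_nonpos_of_nonneg_of_nonpos ha h.1, mul_nonpos_of_nonneg_of_nonpos hb h.2]

theorem mul_inner_smul_add_eq {u v : V} {p q : ℝ} (hp : 2 * ⟪u, v⟫ = p * ⟪u, u⟫)
    (hq : 2 * ⟪u, v⟫ = q * ⟪v, v⟫) (m k m' k' : ℝ) :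
    p * q * ⟪m • u + k • v, m' • u + k' • v⟫ =
      (2 * q * m * m' + p * q * (m * k' + k * m') + 2 * p * k * k') * ⟪u, v⟫ := by
  simp only [inner_add_left, inner_add_right, real_inner_smul_left, real_inner_smul_right,
    real_inner_comm u v]
  linear_combination (-(q * m * m')) * hp - p * k * k' * hq

/-- `h u₂ • u₁ - h u₁ • u₂` spans the kernel of `h` on `span {u₁, u₂}`. -/
theorem eq_zero_of_mem_span_pair (h : V →ₗ[ℝ] ℝ) {u₁ u₂ x : V} (hu₁ : h u₁ ≠ 0)
    (hx : x ∈ Submodule.span ℝ {u₁, u₂})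
    (hhx : h x = 0) (hzx : ⟪h u₂ • u₁ - h u₁ • u₂, x⟫ = 0) : x = 0 := by
  obtain ⟨a, b, rfl⟩ := Submodule.mem_span_pair.mp hx
  simp only [map_add, map_smul, smul_eq_mul] at hhx
  have hx' : a • u₁ + b • u₂ = (-b / h u₁) • (h u₂ • u₁ - h u₁ • u₂) := by
    have ha : a = -b * h u₂ / h u₁ := by field_simp; linarith
    rw [ha]
    match_scalars <;> field_simp
  rw [hx'] at hzx ⊢
  rw [real_inner_smul_right] at hzx
  rcases mul_eq_zero.mp hzx with h0 | h0
  · rw [h0, zero_smul]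
  · rw [inner_self_eq_zero.mp h0, smul_zero]

end InnerProduct

theorem Set.Finite.induction_on_image_lt {α β : Type*} [LinearOrder β] {s : Set α}
    (hs : s.Finite) (f : α → β) {P : α → Prop}
    (step : ∀ a ∈ s, (∀ b ∈ s, f b < f a → P b) → P a) : ∀ a ∈ s, P a := by
  by_contra! ⟨a, ha, hPa⟩
  obtain ⟨b, ⟨hb, hPb⟩, hmin⟩ :=
    Set.exists_min_image {x ∈ s | ¬P x} f (hs.subset fun _ hx => hx.1) ⟨a, ha, hPa⟩
  exact hPb (step b hb fun c hc hcb => by_contra fun hPc => (hmin c ⟨hc, hPc⟩).not_gt hcb)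

theorem LinearIndependent.pair_smul_add {M : Type*} [AddCommGroup M] [Module ℝ M] {x y : M}
    (h : LinearIndependent ℝ ![x, y]) {a b c d : ℝ} (hdet : a * d - b * c ≠ 0) :
    LinearIndependent ℝ ![a • x + b • y, c • x + d • y] := by
  rw [LinearIndependent.pair_iff]
  intro s t hst
  obtain ⟨h₁, h₂⟩ := h.eq_zero_of_pair (s := s * a + t * c) (t := s * b + t * d)
    (by rw [← hst]; module)
  have hs : s * (a * d - b * c) = 0 := by linear_combination d * h₁ - c * h₂
  have ht : t * (a * d - b * c) = 0 := by linear_combination a * h₂ - b * h₁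
  exact ⟨(mul_eq_zero.mp hs).resolve_right hdet, (mul_eq_zero.mp ht).resolve_right hdet⟩

theorem Submodule.eq_span_pair_of_finrank_eq_two {V : Type*} [AddCommGroup V] [Module ℝ V]
    {U : Submodule ℝ V} (hU : Module.finrank ℝ U = 2) {x y : V}
    (hli : LinearIndependent ℝ ![x, y]) (hx : x ∈ U) (hy : y ∈ U) :
    U = Submodule.span ℝ {x, y} := by
  have : FiniteDimensional ℝ U := .of_finrank_pos (by omega)
  refine (Submodule.eq_of_le_of_finrank_le
    (Submodule.span_le.mpr (Set.insert_subset_iff.mpr ⟨hx, Set.singleton_subset_iff.mpr hy⟩))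
    ?_).symm
  rw [hU, ← Matrix.range_cons_cons_empty x y ![], finrank_span_eq_card hli, Fintype.card_fin]

/-- Here `(h, g)` are coordinates on `span s` and `s` lies in the half-plane `h > 0`; the elements
of `s` of least and greatest slope `g / h` span a cone containing `s`. -/
theorem exists_nonneg_comb_pair {E : Type*} [AddCommGroup E] [Module ℝ E] (h g : E →ₗ[ℝ] ℝ)
    {s : Set E} (hs : s.Finite) (hne : s.Nonempty) (hpos : ∀ x ∈ s, 0 < h x)
    (hinj : ∀ x ∈ Submodule.span ℝ s, h x = 0 → g x = 0 → x = 0) :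
    ∃ η₁ ∈ s, ∃ η₂ ∈ s, ∀ ψ ∈ s, ∃ a b : ℝ, 0 ≤ a ∧ 0 ≤ b ∧ ψ = a • η₁ + b • η₂ := by
  set κ : E → ℝ := fun x => g x / h x
  obtain ⟨η₁, h₁, hmin⟩ := s.exists_min_image κ hs hne
  obtain ⟨η₂, h₂, hmax⟩ := s.exists_max_image κ hs hne
  refine ⟨η₁, h₁, η₂, h₂, fun ψ hψ => ?_⟩
  have hg : ∀ x ∈ s, g x = κ x * h x := fun x hx => (div_mul_cancel₀ _ (hpos x hx).ne').symm
  have hcomb : ∀ a b : ℝ, h ψ = a * h η₁ + b * h η₂ → g ψ = a * g η₁ + b * g η₂ →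
      ψ = a • η₁ + b • η₂ := by
    intro a b hh hg
    have hmem : ψ - (a • η₁ + b • η₂) ∈ Submodule.span ℝ s :=
      sub_mem (Submodule.subset_span hψ) <| add_mem
        (Submodule.smul_mem _ _ (Submodule.subset_span h₁))
        (Submodule.smul_mem _ _ (Submodule.subset_span h₂))
    exact sub_eq_zero.mp (hinj _ hmem (by simp [hh]) (by simp [hg]))
  have hψ₁ := hmin ψ hψ
  have hψ₂ := hmax ψ hψ
  have p₁ := hpos η₁ h₁
  have p₂ := hpos η₂ h₂
  have pψ := hpos ψ hψ
  rcases (hmin η₂ h₂).lt_or_eq with hlt | heq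
  · refine ⟨h ψ * (κ η₂ - κ ψ) / ((κ η₂ - κ η₁) * h η₁),
      h ψ * (κ ψ - κ η₁) / ((κ η₂ - κ η₁) * h η₂), ?_, ?_, hcomb _ _ ?_ ?_⟩
    · exact div_nonneg (mul_nonneg pψ.le (sub_nonneg.mpr hψ₂)) (by positivity)
    · exact div_nonneg (mul_nonneg pψ.le (sub_nonneg.mpr hψ₁)) (by positivity)
    · field_simp
      ring
    · rw [hg ψ hψ, hg η₁ h₁, hg η₂ h₂]
      field_simp
      ring
  · refine ⟨h ψ / h η₁, 0, by positivity, le_rfl, hcomb _ _ (by field_simp; ring) ?_⟩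
    rw [hg ψ hψ, hg η₁ h₁, le_antisymm hψ₁ (heq ▸ hψ₂)]
    field_simp
    ring

section RootSystem

variable {V : Type*} [NormedAddCommGroup V] [InnerProductSpace ℝ V]

namespace RootSystemData

variable (R : RootSystemData V) {α β : V}

theorem exists_two_mul_inner_eq (hα : α ∈ R.Φ) (hβ : β ∈ R.Φ) :
    ∃ n : ℤ, 2 * ⟪α, β⟫ = n * ⟪α, α⟫ := by
  obtain ⟨n, hn⟩ := R.crystallographic α hα β hβ
  exact ⟨n, by rwa [div_eq_iff (real_inner_self_pos.mpr (R.nonzero α hα)).ne'] at hn⟩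

theorem sub_smul_mem (hα : α ∈ R.Φ) (hβ : β ∈ R.Φ) {n : ℤ} (hn : 2 * ⟪α, β⟫ = n * ⟪α, α⟫) :
    β - (n : ℝ) • α ∈ R.Φ := by
  have h := R.reflect_mem α hα β hβ
  rwa [hn, mul_div_cancel_right₀ _ (real_inner_self_pos.mpr (R.nonzero α hα)).ne'] at h

theorem mul_lt_four (hα : α ∈ R.Φ) (hβ : β ∈ R.Φ) (h : LinearIndependent ℝ ![α, β]) {n m : ℤ}
    (hn : 2 * ⟪α, β⟫ = n * ⟪α, α⟫) (hm : 2 * ⟪α, β⟫ = m * ⟪β, β⟫) : n * m < 4 := by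
  have hα' : 0 < ⟪α, α⟫ := real_inner_self_pos.mpr (R.nonzero α hα)
  have hβ' : 0 < ⟪β, β⟫ := real_inner_self_pos.mpr (R.nonzero β hβ)
  have hcs := real_inner_sq_lt_of_linearIndependent h
  have hprod : ((n * m : ℤ) : ℝ) * (⟪α, α⟫ * ⟪β, β⟫) = 4 * ⟪α, β⟫ ^ 2 := by
    push_cast
    linear_combination (-(m * ⟪β, β⟫)) * hn - 2 * ⟪α, β⟫ * hm
  have : ((n * m : ℤ) : ℝ) * (⟪α, α⟫ * ⟪β, β⟫) < 4 * (⟪α, α⟫ * ⟪β, β⟫) := by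
    linarith
  exact_mod_cast lt_of_mul_lt_mul_right this (mul_pos hα' hβ').le

theorem sub_mem_of_inner_pos (hα : α ∈ R.Φ) (hβ : β ∈ R.Φ) (hpos : 0 < ⟪α, β⟫)
    (h : LinearIndependent ℝ ![α, β]) : β - α ∈ R.Φ := by
  obtain ⟨n, hn⟩ := R.exists_two_mul_inner_eq hα hβ
  obtain ⟨m, hm⟩ := R.exists_two_mul_inner_eq hβ hα
  rw [real_inner_comm] at hm
  have hα' : 0 < ⟪α, α⟫ := real_inner_self_pos.mpr (R.nonzero α hα)
  have hβ' : 0 < ⟪β, β⟫ := real_inner_self_pos.mpr (R.nonzero β hβ)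
  have hn0 : 0 < n := by
    have : (0 : ℝ) < n := pos_of_mul_pos_left (hn ▸ by positivity) hα'.le
    exact_mod_cast this
  have hm0 : 0 < m := by
    have : (0 : ℝ) < m := pos_of_mul_pos_left (hm ▸ by positivity) hβ'.le
    exact_mod_cast this
  have h4 := R.mul_lt_four hα hβ h hn hm
  obtain rfl | rfl : n = 1 ∨ m = 1 := by
    by_contra! hne
    nlinarith [hne.1.lt_of_le' hn0, hne.2.lt_of_le' hm0]
  · simpa using R.sub_smul_mem hα hβ hn
  · rw [real_inner_comm] at hm
    simpa using R.neg_mem _ (R.sub_smul_mem hβ hα hm)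

end RootSystemData

end RootSystem

/-- `p`, `q` are the Cartan integers of simple roots `η₁`, `η₂`; `hk` and `hM` say that the
reflections of `m η₁ + k η₂` in `η₂` and of `M η₁ + K η₂` in `η₁` are positive roots, and `hP` is
`⟪m η₁ + k η₂, M η₁ + K η₂⟫ ≤ 0` multiplied by the negative number `p q / ⟪η₁, η₂⟫`. -/
theorem cartan_crossing_absurd {p q m k M K : ℤ} (hp : p < 0) (hq : q < 0) (hpq : p * q < 4)
    (hm : 1 ≤ m) (hmM : m < M) (hK : 1 ≤ K) (hKk : K < k)
    (hk : m * q + 2 * k < k ∨ m * q + 2 * k = k ∧ m = 1)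
    (hM : K * p + 2 * M < M ∨ K * p + 2 * M = M ∧ K = 1)
    (hP : 0 ≤ 2 * q * m * M + p * q * (m * K + k * M) + 2 * p * k * K) : False := by
  have hq3 : -3 ≤ q := by nlinarith
  have hp3 : -3 ≤ p := by nlinarith
  interval_cases p <;> interval_cases q <;> rcases hk with hk | ⟨hk, rfl⟩ <;>
    rcases hM with hM | ⟨hM, rfl⟩ <;> first | omega | nlinarith

namespace RootBase

variable {V : Type*} [NormedAddCommGroup V] [InnerProductSpace ℝ V]
  {R : RootSystemData V} {ι : Type*} [Fintype ι] (B : RootBase R ι)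

noncomputable def height : V →ₗ[ℝ] ℝ := ∑ i, B.b.coord i

theorem height_apply (γ : V) : B.height γ = ∑ i, B.b.repr γ i := by
  simp [height]

theorem height_pos {γ : V} (hγ : B.IsPos γ) : 0 < B.height γ := by
  have hnonneg : ∀ i ∈ Finset.univ, 0 ≤ B.b.repr γ i := fun i _ => hγ.2 i
  rw [height_apply]
  refine (Finset.sum_nonneg hnonneg).lt_of_ne fun h => R.nonzero γ hγ.1 ?_
  have hzero := (Finset.sum_eq_zero_iff_of_nonneg hnonneg).mp h.symm
  exact B.b.repr.injective (Finsupp.ext fun i => by simpa using hzero i (Finset.mem_univ i))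

theorem isPos_or_isPos_neg {γ : V} (hγ : γ ∈ R.Φ) : B.IsPos γ ∨ B.IsPos (-γ) :=
  (B.coord_sign γ hγ).imp (fun h => ⟨hγ, h⟩) fun h => ⟨R.neg_mem γ hγ, fun i => by simpa using h i⟩

theorem eq_one_of_isPos_smul {γ : V} {c : ℝ} (hγ : B.IsPos γ) (hcγ : B.IsPos (c • γ)) :
    c = 1 := by
  refine (R.reduced γ hγ.1 c hcγ.1).resolve_right fun hc => ?_
  have := B.height_pos hcγ
  rw [hc, map_smul, smul_eq_mul] at this
  linarith [B.height_pos hγ]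

theorem linearIndependent_of_isPos {γ₁ γ₂ : V} (h₁ : B.IsPos γ₁) (h₂ : B.IsPos γ₂)
    (hne : γ₁ ≠ γ₂) : LinearIndependent ℝ ![γ₁, γ₂] := by
  refine (LinearIndependent.pair_iff' (R.nonzero γ₁ h₁.1)).mpr fun c hc => hne ?_
  have hc1 : c = 1 := B.eq_one_of_isPos_smul h₁ (by rwa [hc])
  rw [← hc, hc1, one_smul]

theorem rle_antisymm {γ γ' : V} (h : B.rle γ γ') (h' : B.rle γ' γ) : γ = γ' :=
  B.b.repr.injective (Finsupp.ext fun i => le_antisymm (h i) (h' i))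

/-- `η₁`, `η₂` are the simple roots of the rank-two subsystem `Φ ∩ span {η₁, η₂}`. -/
structure RankTwoBase (B : RootBase R ι) where
  η₁ : V
  η₂ : V
  isPos_η₁ : B.IsPos η₁
  isPos_η₂ : B.IsPos η₂
  linearIndependent : LinearIndependent ℝ ![η₁, η₂]
  nonneg_of_isPos : ∀ a b : ℝ, B.IsPos (a • η₁ + b • η₂) → 0 ≤ a ∧ 0 ≤ b

namespace RankTwoBase

variable {B} (C : RankTwoBase B)

def swap : RankTwoBase B where
  η₁ := C.η₂
  η₂ := C.η₁
  isPos_η₁ := C.isPos_η₂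
  isPos_η₂ := C.isPos_η₁
  linearIndependent := LinearIndependent.pair_symm_iff.mp C.linearIndependent
  nonneg_of_isPos a b h := (C.nonneg_of_isPos b a (by rwa [add_comm])).symm

theorem nonneg_or_nonpos {a b : ℝ} (h : a • C.η₁ + b • C.η₂ ∈ R.Φ) :
    (0 ≤ a ∧ 0 ≤ b) ∨ (a ≤ 0 ∧ b ≤ 0) := by
  refine (B.isPos_or_isPos_neg h).imp (C.nonneg_of_isPos a b) fun hneg => ?_
  have := C.nonneg_of_isPos (-a) (-b) (by convert hneg using 1; module)
  exact ⟨by linarith [this.1], by linarith [this.2]⟩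

theorem isPos_sub_η₁ {a b : ℝ} (hψ : B.IsPos (a • C.η₁ + b • C.η₂)) (hb : 0 < b)
    (hinner : 0 < ⟪C.η₁, a • C.η₁ + b • C.η₂⟫) : B.IsPos ((a - 1) • C.η₁ + b • C.η₂) := by
  have hli : LinearIndependent ℝ ![C.η₁, a • C.η₁ + b • C.η₂] := by
    simpa using C.linearIndependent.pair_smul_add (a := 1) (b := 0) (c := a) (d := b)
      (by simpa using hb.ne')
  have hmem := R.sub_mem_of_inner_pos C.isPos_η₁.1 hψ.1 hinner hli
  rw [show a • C.η₁ + b • C.η₂ - C.η₁ = (a - 1) • C.η₁ + b • C.η₂ by module] at hmem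
  refine (B.isPos_or_isPos_neg hmem).resolve_right fun hneg => ?_
  have := C.nonneg_of_isPos (1 - a) (-b) (by convert hneg using 1; module)
  linarith [this.2]

theorem isPos_sub_η₂ {a b : ℝ} (hψ : B.IsPos (a • C.η₁ + b • C.η₂)) (ha : 0 < a)
    (hinner : 0 < ⟪C.η₂, a • C.η₁ + b • C.η₂⟫) : B.IsPos (a • C.η₁ + (b - 1) • C.η₂) := by
  rw [add_comm] at hψ hinner ⊢
  exact C.swap.isPos_sub_η₁ hψ ha hinner

theorem exists_nat_coeffs {a b : ℝ} (hψ : B.IsPos (a • C.η₁ + b • C.η₂)) :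
    ∃ m k : ℕ, a = m ∧ b = k := by
  suffices ∀ ψ ∈ R.Φ, ∀ a b : ℝ, ψ = a • C.η₁ + b • C.η₂ → B.IsPos ψ →
      ∃ m k : ℕ, a = m ∧ b = k from this _ hψ.1 a b rfl hψ
  refine R.finite.induction_on_image_lt B.height fun ψ _ ih a b hψeq hψ => ?_
  subst hψeq
  obtain ⟨ha, hb⟩ := C.nonneg_of_isPos a b hψ
  rcases ha.eq_or_lt with rfl | ha
  · have hb1 := B.eq_one_of_isPos_smul C.isPos_η₂ (by simpa using hψ)
    exact ⟨0, 1, by simp, by simp [hb1]⟩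
  rcases hb.eq_or_lt with rfl | hb
  · have ha1 := B.eq_one_of_isPos_smul C.isPos_η₁ (by simpa using hψ)
    exact ⟨1, 0, by simp [ha1], by simp⟩
  have hη₁ := B.height_pos C.isPos_η₁
  have hη₂ := B.height_pos C.isPos_η₂
  rcases inner_pos_or_inner_pos_of_nonneg ha.le hb.le (R.nonzero _ hψ.1) with h | h
  · have hψ' := C.isPos_sub_η₁ hψ hb h
    obtain ⟨m, k, hm, hk⟩ := ih _ hψ'.1 (by simp only [map_add, map_smul, smul_eq_mul]; nlinarith)
      (a - 1) b rfl hψ'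
    exact ⟨m + 1, k, by push_cast; linarith, hk⟩
  · have hψ' := C.isPos_sub_η₂ hψ ha h
    obtain ⟨m, k, hm, hk⟩ := ih _ hψ'.1 (by simp only [map_add, map_smul, smul_eq_mul]; nlinarith)
      a (b - 1) rfl hψ'
    exact ⟨m, k + 1, hm, by push_cast; linarith⟩

theorem rle_of_le {a b a' b' : ℝ} (ha : a ≤ a') (hb : b ≤ b') :
    B.rle (a • C.η₁ + b • C.η₂) (a' • C.η₁ + b' • C.η₂) := fun i => by
  simp only [map_add, map_smul, Finsupp.add_apply, Finsupp.smul_apply, smul_eq_mul]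
  exact add_le_add (mul_le_mul_of_nonneg_right ha (C.isPos_η₁.2 i))
    (mul_le_mul_of_nonneg_right hb (C.isPos_η₂.2 i))

theorem pairing_η₂_lt_or_eq {a b : ℝ} (hψ : B.IsPos (a • C.η₁ + b • C.η₂)) (ha : 0 < a) {n : ℤ}
    (hn : 2 * ⟪C.η₂, a • C.η₁ + b • C.η₂⟫ = n * ⟪C.η₂, C.η₂⟫) :
    (n : ℝ) < b ∨ (n : ℝ) = b ∧ a = 1 := by
  have hmem := R.sub_smul_mem C.isPos_η₂.1 hψ.1 hn
  rw [show a • C.η₁ + b • C.η₂ - (n : ℝ) • C.η₂ = a • C.η₁ + (b - n) • C.η₂ by module] at hmem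
  have hnb : (n : ℝ) ≤ b := by
    rcases C.nonneg_or_nonpos hmem with h | h <;> linarith [h.1, h.2]
  refine hnb.lt_or_eq.imp_right fun hnb => ⟨hnb, ?_⟩
  rw [hnb, sub_self, zero_smul, add_zero] at hmem
  exact (R.reduced _ C.isPos_η₁.1 a hmem).resolve_right (by linarith)

theorem pairing_η₁_lt_or_eq {a b : ℝ} (hψ : B.IsPos (a • C.η₁ + b • C.η₂)) (hb : 0 < b) {n : ℤ}
    (hn : 2 * ⟪C.η₁, a • C.η₁ + b • C.η₂⟫ = n * ⟪C.η₁, C.η₁⟫) :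
    (n : ℝ) < a ∨ (n : ℝ) = a ∧ b = 1 := by
  rw [add_comm] at hψ hn
  exact C.swap.pairing_η₂_lt_or_eq hψ hb hn

theorem inner_nonpos_of_lt_of_lt {a b a' b' : ℝ} (hδ : B.IsPos (a • C.η₁ + b • C.η₂))
    (hδ' : B.IsPos (a' • C.η₁ + b' • C.η₂)) (ha : a < a') (hb : b' < b) :
    ⟪a • C.η₁ + b • C.η₂, a' • C.η₁ + b' • C.η₂⟫ ≤ 0 := by
  obtain ⟨ha₀, hb₀⟩ := C.nonneg_of_isPos a b hδ
  obtain ⟨ha₀', hb₀'⟩ := C.nonneg_of_isPos a' b' hδ'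
  by_contra! hpos
  have hli := C.linearIndependent.pair_smul_add (a := a') (b := b') (c := a) (d := b)
    (by nlinarith [mul_pos (sub_pos.mpr ha) (hb₀'.trans_lt hb), mul_nonneg ha₀ (sub_pos.mpr hb).le])
  have hmem := R.sub_mem_of_inner_pos hδ'.1 hδ.1 (by rwa [real_inner_comm]) hli
  rw [show a • C.η₁ + b • C.η₂ - (a' • C.η₁ + b' • C.η₂) = (a - a') • C.η₁ + (b - b') • C.η₂ by
    module] at hmem
  rcases C.nonneg_or_nonpos hmem with h | h <;> linarith [h.1, h.2]

theorem false_of_lt_of_lt {m k m' k' : ℕ} (hδ : B.IsPos ((m : ℝ) • C.η₁ + (k : ℝ) • C.η₂))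
    (hδ' : B.IsPos ((m' : ℝ) • C.η₁ + (k' : ℝ) • C.η₂)) (hm₀ : 0 < m) (hk₀ : 0 < k')
    (hm : m < m') (hk : k' < k) : False := by
  obtain ⟨p, hp⟩ := R.exists_two_mul_inner_eq C.isPos_η₁.1 C.isPos_η₂.1
  obtain ⟨q, hq⟩ := R.exists_two_mul_inner_eq C.isPos_η₂.1 C.isPos_η₁.1
  rw [real_inner_comm C.η₁ C.η₂] at hq
  have hkR := C.pairing_η₂_lt_or_eq hδ (by exact_mod_cast hm₀) (n := m * q + 2 * k) (by
    simp only [inner_add_right, real_inner_smul_right, real_inner_comm C.η₁ C.η₂]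
    push_cast
    linear_combination (m : ℝ) * hq)
  have hmR := C.pairing_η₁_lt_or_eq hδ' (by exact_mod_cast hk₀) (n := k' * p + 2 * m') (by
    simp only [inner_add_right, real_inner_smul_right]
    push_cast
    linear_combination (k' : ℝ) * hp)
  have hkZ : (m : ℤ) * q + 2 * k < k ∨ (m : ℤ) * q + 2 * k = k ∧ (m : ℤ) = 1 := by
    exact_mod_cast hkR
  have hmZ : (k' : ℤ) * p + 2 * m' < m' ∨ (k' : ℤ) * p + 2 * m' = m' ∧ (k' : ℤ) = 1 := by
    exact_mod_cast hmR
  have hq₀ : q < 0 := by rcases hkZ with h | h <;> nlinarith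
  have hp₀ : p < 0 := by rcases hmZ with h | h <;> nlinarith
  have hE : ⟪C.η₁, C.η₂⟫ < 0 := by
    have hy := real_inner_self_pos.mpr (R.nonzero _ C.isPos_η₂.1)
    have : (q : ℝ) < 0 := by exact_mod_cast hq₀
    nlinarith
  have hpq₀ : (0 : ℝ) < p * q := by exact_mod_cast mul_pos_of_neg_of_neg hp₀ hq₀
  have hP := mul_nonpos_of_nonneg_of_nonpos hpq₀.le
    (C.inner_nonpos_of_lt_of_lt hδ hδ' (Nat.cast_lt.mpr hm) (Nat.cast_lt.mpr hk))
  rw [mul_inner_smul_add_eq hp hq] at hP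
  have hbracket : (0 : ℝ) ≤ 2 * q * m * m' + p * q * (m * k' + k * m') + 2 * p * k * k' :=
    nonneg_of_mul_nonpos_left hP hE
  exact cartan_crossing_absurd hp₀ hq₀ (R.mul_lt_four C.isPos_η₁.1 C.isPos_η₂.1
    C.linearIndependent hp hq) (by omega) (by omega) (by omega) (by omega) hkZ hmZ
    (by exact_mod_cast hbracket)

theorem coeffs_eq_of_lt_of_lt {m k m' k' : ℕ}
    (hδ : B.IsPos ((m : ℝ) • C.η₁ + (k : ℝ) • C.η₂))
    (hδ' : B.IsPos ((m' : ℝ) • C.η₁ + (k' : ℝ) • C.η₂)) (hm : m < m') (hk : k' < k) :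
    m = 0 ∧ k = 1 ∧ m' = 1 ∧ k' = 0 := by
  rcases Nat.eq_zero_or_pos m with rfl | hm₀
  · have hk₁ : (k : ℝ) = 1 := B.eq_one_of_isPos_smul C.isPos_η₂ (by simpa using hδ)
    obtain rfl : k = 1 := by exact_mod_cast hk₁
    obtain rfl : k' = 0 := by omega
    have hm₁ : (m' : ℝ) = 1 := B.eq_one_of_isPos_smul C.isPos_η₁ (by simpa using hδ')
    exact ⟨rfl, rfl, by exact_mod_cast hm₁, rfl⟩
  rcases Nat.eq_zero_or_pos k' with rfl | hk₀
  · have hm₁ : (m' : ℝ) = 1 := B.eq_one_of_isPos_smul C.isPos_η₁ (by simpa using hδ')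
    have : m' = 1 := by exact_mod_cast hm₁
    omega
  exact (C.false_of_lt_of_lt hδ hδ' hm₀ hk₀ hm hk).elim

theorem eq_η₁_or_eq_η₂_or_le {m k : ℕ} (hψ : B.IsPos ((m : ℝ) • C.η₁ + (k : ℝ) • C.η₂)) :
    (m : ℝ) • C.η₁ + (k : ℝ) • C.η₂ = C.η₁ ∨ (m : ℝ) • C.η₁ + (k : ℝ) • C.η₂ = C.η₂ ∨
      B.rle C.η₁ ((m : ℝ) • C.η₁ + (k : ℝ) • C.η₂) ∧
        B.rle C.η₂ ((m : ℝ) • C.η₁ + (k : ℝ) • C.η₂) := by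
  rcases Nat.eq_zero_or_pos m with rfl | hm
  · have hk := B.eq_one_of_isPos_smul C.isPos_η₂ (by simpa using hψ)
    simp [hk]
  rcases Nat.eq_zero_or_pos k with rfl | hk
  · have hm := B.eq_one_of_isPos_smul C.isPos_η₁ (by simpa using hψ)
    simp [hm]
  refine Or.inr (Or.inr ⟨?_, ?_⟩)
  · simpa using C.rle_of_le (a := 1) (b := 0) (by exact_mod_cast hm) (Nat.cast_nonneg k)
  · simpa using C.rle_of_le (a := 0) (b := 1) (Nat.cast_nonneg m) (by exact_mod_cast hk)

theorem pair_eq_of_not_rle {m₁ k₁ m₂ k₂ : ℕ} (h₁ : B.IsPos ((m₁ : ℝ) • C.η₁ + (k₁ : ℝ) • C.η₂))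
    (h₂ : B.IsPos ((m₂ : ℝ) • C.η₁ + (k₂ : ℝ) • C.η₂))
    (h₁₂ : ¬ B.rle ((m₁ : ℝ) • C.η₁ + (k₁ : ℝ) • C.η₂) ((m₂ : ℝ) • C.η₁ + (k₂ : ℝ) • C.η₂))
    (h₂₁ : ¬ B.rle ((m₂ : ℝ) • C.η₁ + (k₂ : ℝ) • C.η₂) ((m₁ : ℝ) • C.η₁ + (k₁ : ℝ) • C.η₂)) :
    ({(m₁ : ℝ) • C.η₁ + (k₁ : ℝ) • C.η₂, (m₂ : ℝ) • C.η₁ + (k₂ : ℝ) • C.η₂} : Set V) =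
      {C.η₁, C.η₂} := by
  have hrle {a b a' b' : ℕ} (ha : a ≤ a') (hb : b ≤ b') :=
    C.rle_of_le (a := a) (b := b) (a' := a') (b' := b') (Nat.cast_le.mpr ha) (Nat.cast_le.mpr hb)
  rcases le_or_gt m₁ m₂ with hm | hm <;> rcases le_or_gt k₁ k₂ with hk | hk
  · exact absurd (hrle hm hk) h₁₂
  · rcases hm.lt_or_eq with hm | rfl
    · obtain ⟨rfl, rfl, rfl, rfl⟩ := C.coeffs_eq_of_lt_of_lt h₁ h₂ hm hk
      simpa using Set.pair_comm _ _
    · exact absurd (hrle le_rfl hk.le) h₂₁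
  · rcases hk.lt_or_eq with hk | rfl
    · obtain ⟨rfl, rfl, rfl, rfl⟩ := C.coeffs_eq_of_lt_of_lt h₂ h₁ hm hk
      simp
    · exact absurd (hrle hm.le le_rfl) h₂₁
  · exact absurd (hrle hm.le hk.le) h₂₁

theorem eq_of_rle {γ₁ γ₂ : V} (hinc : ¬ B.rle γ₁ γ₂ ∧ ¬ B.rle γ₂ γ₁)
    (hγ : ({γ₁, γ₂} : Set V) = {C.η₁, C.η₂}) {m k : ℕ}
    (hδ : B.IsPos ((m : ℝ) • C.η₁ + (k : ℝ) • C.η₂))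
    (hle : B.rle ((m : ℝ) • C.η₁ + (k : ℝ) • C.η₂) γ₁) : (m : ℝ) • C.η₁ + (k : ℝ) • C.η₂ = γ₁ := by
  rcases Set.pair_eq_pair_iff.mp hγ with ⟨rfl, rfl⟩ | ⟨rfl, rfl⟩ <;>
    rcases C.eq_η₁_or_eq_η₂_or_le hδ with h | h | h
  · exact h
  · exact absurd (h ▸ hle) hinc.2
  · exact B.rle_antisymm hle h.1
  · exact absurd (h ▸ hle) hinc.2
  · exact h
  · exact B.rle_antisymm hle h.2

end RankTwoBase

theorem exists_rankTwoBase {U : Submodule ℝ V} (hU : Module.finrank ℝ U = 2) {γ₁ γ₂ : V}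
    (h₁ : B.IsPos γ₁) (h₂ : B.IsPos γ₂) (hU₁ : γ₁ ∈ U) (hU₂ : γ₂ ∈ U) (hne : γ₁ ≠ γ₂) :
    ∃ C : RankTwoBase B, ∀ ψ ∈ U, B.IsPos ψ → ∃ m k : ℕ, ψ = (m : ℝ) • C.η₁ + (k : ℝ) • C.η₂ := by
  have hUeq := Submodule.eq_span_pair_of_finrank_eq_two hU
    (B.linearIndependent_of_isPos h₁ h₂ hne) hU₁ hU₂
  have hs : {ψ | B.IsPos ψ ∧ ψ ∈ U}.Finite := R.finite.subset fun ψ hψ => hψ.1.1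
  obtain ⟨η₁, hη₁, η₂, hη₂, hcone⟩ := exists_nonneg_comb_pair B.height
    (innerₗ V (B.height γ₂ • γ₁ - B.height γ₁ • γ₂)) hs ⟨γ₁, h₁, hU₁⟩
    (fun x hx => B.height_pos hx.1) fun x hx hhx hgx =>
      eq_zero_of_mem_span_pair B.height (B.height_pos h₁).ne'
        (hUeq ▸ Submodule.span_le.mpr (fun ψ hψ => hψ.2) hx) hhx hgx
  have hne' : η₁ ≠ η₂ := by
    rintro rfl
    obtain ⟨a, b, -, -, rfl⟩ := hcone γ₁ ⟨h₁, hU₁⟩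
    obtain ⟨c, d, -, -, rfl⟩ := hcone γ₂ ⟨h₂, hU₂⟩
    simp only [← add_smul] at h₁ h₂ hne
    rw [B.eq_one_of_isPos_smul hη₁.1 h₁, B.eq_one_of_isPos_smul hη₁.1 h₂] at hne
    exact hne rfl
  have hli := B.linearIndependent_of_isPos hη₁.1 hη₂.1 hne'
  let C : RankTwoBase B :=
    { η₁, η₂
      isPos_η₁ := hη₁.1
      isPos_η₂ := hη₂.1
      linearIndependent := hli
      nonneg_of_isPos := fun a b hab => by
        obtain ⟨a', b', ha', hb', heq⟩ :=
          hcone _ ⟨hab, add_mem (U.smul_mem a hη₁.2) (U.smul_mem b hη₂.2)⟩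
        obtain ⟨rfl, rfl⟩ := hli.eq_of_pair heq
        exact ⟨ha', hb'⟩ }
  refine ⟨C, fun ψ hψU hψ => ?_⟩
  obtain ⟨a, b, -, -, rfl⟩ := hcone ψ ⟨hψ, hψU⟩
  obtain ⟨m, k, rfl, rfl⟩ := C.exists_nat_coeffs hψ
  exact ⟨m, k, rfl⟩

end RootBase

theorem rank_two_incomparable_general {V : Type*} [NormedAddCommGroup V] [InnerProductSpace ℝ V]
    {ι : Type*} [Fintype ι] (R : RootSystemData V) (B : RootBase R ι)
    (S : Set V)
    (hrank : Module.finrank ℝ (Submodule.span ℝ S) = 2)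
    (Ψpos : Set V) (hΨ : Ψpos = B.Pos ∩ (Submodule.span ℝ S : Set V)) :
    ∀ γ₁ ∈ Ψpos, ∀ γ₂ ∈ Ψpos, (¬ B.rle γ₁ γ₂ ∧ ¬ B.rle γ₂ γ₁) →
      ((∀ δ₁ ∈ Ψpos, ∀ δ₂ ∈ Ψpos, (¬ B.rle δ₁ δ₂ ∧ ¬ B.rle δ₂ δ₁) →
          ({δ₁, δ₂} : Set V) = {γ₁, γ₂}) ∧
        (∀ δ ∈ Ψpos, B.rle δ γ₁ → δ = γ₁) ∧
        (∀ δ ∈ Ψpos, B.rle δ γ₂ → δ = γ₂)) := by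
  intro γ₁ hγ₁ γ₂ hγ₂ hinc
  have hmem : ∀ δ ∈ Ψpos, B.IsPos δ ∧ δ ∈ Submodule.span ℝ S := by
    subst hΨ
    exact fun δ hδ => hδ
  obtain ⟨C, hC⟩ := B.exists_rankTwoBase hrank (hmem γ₁ hγ₁).1 (hmem γ₂ hγ₂).1
    (hmem γ₁ hγ₁).2 (hmem γ₂ hγ₂).2 fun h => hinc.1 (h ▸ fun _ => le_rfl)
  have hcoeffs : ∀ δ ∈ Ψpos, ∃ m k : ℕ, δ = (m : ℝ) • C.η₁ + (k : ℝ) • C.η₂ :=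
    fun δ hδ => hC δ (hmem δ hδ).2 (hmem δ hδ).1
  have hpair : ∀ δ₁ ∈ Ψpos, ∀ δ₂ ∈ Ψpos, (¬ B.rle δ₁ δ₂ ∧ ¬ B.rle δ₂ δ₁) →
      ({δ₁, δ₂} : Set V) = {C.η₁, C.η₂} := by
    intro δ₁ h₁ δ₂ h₂ h
    obtain ⟨m₁, k₁, rfl⟩ := hcoeffs δ₁ h₁
    obtain ⟨m₂, k₂, rfl⟩ := hcoeffs δ₂ h₂
    exact C.pair_eq_of_not_rle (hmem _ h₁).1 (hmem _ h₂).1 h.1 h.2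
  have hγ := hpair γ₁ hγ₁ γ₂ hγ₂ hinc
  have hmin {γ γ' : V} (hinc' : ¬ B.rle γ γ' ∧ ¬ B.rle γ' γ)
      (hγ' : ({γ, γ'} : Set V) = {C.η₁, C.η₂}) : ∀ δ ∈ Ψpos, B.rle δ γ → δ = γ := by
    intro δ hδ hle
    obtain ⟨m, k, rfl⟩ := hcoeffs δ hδ
    exact C.eq_of_rle hinc' hγ' (hmem _ hδ).1 hle
  exact ⟨fun δ₁ h₁ δ₂ h₂ h => (hpair δ₁ h₁ δ₂ h₂ h).trans hγ.symm, hmin hinc hγ,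
    hmin hinc.symm (by rw [Set.pair_comm, hγ])⟩

/-- Any rank two subsystem of Φ contains at most one pair of positive roots that are
incomparable in the root poset on Φ⁺; if they exist, these two elements are minimal among
all positive roots in the subsystem. -/
theorem rank_two_incomparable {V : Type*} [NormedAddCommGroup V] [InnerProductSpace ℝ V]
    {ι : Type*} [Fintype ι] (R : RootSystemData V) (B : RootBase R ι)
    (S : Set V) (hS : S ⊆ R.Φ)
    (hrank : Module.finrank ℝ (Submodule.span ℝ S) = 2)
    (Ψpos : Set V) (hΨ : Ψpos = B.Pos ∩ (Submodule.span ℝ S : Set V)) :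
    ∀ γ₁ ∈ Ψpos, ∀ γ₂ ∈ Ψpos, (¬ B.rle γ₁ γ₂ ∧ ¬ B.rle γ₂ γ₁) →
      ((∀ δ₁ ∈ Ψpos, ∀ δ₂ ∈ Ψpos, (¬ B.rle δ₁ δ₂ ∧ ¬ B.rle δ₂ δ₁) →
          ({δ₁, δ₂} : Set V) = {γ₁, γ₂}) ∧
        (∀ δ ∈ Ψpos, B.rle δ γ₁ → δ = γ₁) ∧
        (∀ δ ∈ Ψpos, B.rle δ γ₂ → δ = γ₂)) :=
  rank_two_incomparable_general R B S hrank Ψpos hΨ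
end

section
/- Let Φ be a finite crystallographic root system with simple roots Δ, α, β ∈ Δ, a, b positive integers with aα + bβ ∈ Φ⁺, and Φ' = Φ ∩ span({aα + bβ} ∪ Δ\{α,β}) with positive system Φ'⁺ = Φ' ∩ Φ⁺ and simple roots Δ' = {aα + bβ} ∪ Δ\{α,β}. Then the root poset on Φ'⁺ (defined coordinatewise over Δ') coincides with the partial order induced on Φ'⁺ from the root poset on Φ⁺. -/
open scoped RealInnerProductSpace

/-! Both γ and γ' lie in span Δ', so the α- and β-coordinates of γ' - γ are in ratio a : b.
A vector with that property has nonnegative coordinates over Δ exactly when it is a nonnegative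
combination of Δ': take t = (γ' - γ)_α / a as the coefficient of aα + bβ. -/

namespace Module.Basis

variable {R M ι : Type*} [AddCommGroup M] {i j : ι} {a b : R}

section CommRing

variable [CommRing R] [Module R M] (e : Basis ι R M)

theorem mul_repr_eq_of_mem_span_pair_smul_add (hij : i ≠ j) {x : M}
    (hx : x ∈ Submodule.span R ({a • e i + b • e j} ∪ (Set.range e \ {e i, e j}))) :
    b * e.repr x i = a * e.repr x j := by
  let L : M →ₗ[R] R := b • e.coord i - a • e.coord j
  suffices Submodule.span R ({a • e i + b • e j} ∪ (Set.range e \ {e i, e j})) ≤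
      LinearMap.ker L by
    simpa [L, sub_eq_zero] using this hx
  rw [Submodule.span_le]
  rintro x (rfl | ⟨⟨k, rfl⟩, hk⟩)
  · simp [L, hij, hij.symm, mul_comm]
  · have hki : k ≠ i := fun h => hk (by simp [h])
    have hkj : k ≠ j := fun h => hk (by simp [h])
    simp [L, hki.symm, hkj.symm]

end CommRing

section LinearOrderedField

variable [Field R] [LinearOrder R] [IsStrictOrderedRing R] [Module R M] [Fintype ι]
  [DecidableEq ι] (e : Basis ι R M)

theorem repr_smul_add_sum_nonneg (ha : 0 ≤ a) (hb : 0 ≤ b) {t : R} {m : ι → R} (ht : 0 ≤ t)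
    (hm : ∀ k, 0 ≤ m k) (k : ι) :
    0 ≤ e.repr (t • (a • e i + b • e j) + ∑ l ∈ Finset.univ \ {i, j}, m l • e l) k := by
  have hsum : e.repr (∑ l ∈ Finset.univ \ {i, j}, m l • e l) k =
      ∑ l ∈ Finset.univ \ {i, j}, m l * e.repr (e l) k := by
    simp only [map_sum, map_smul, Finsupp.finsetSum_apply, Finsupp.smul_apply, smul_eq_mul]
  rw [map_add, Finsupp.add_apply, map_smul, Finsupp.smul_apply, smul_eq_mul, hsum]
  refine add_nonneg (mul_nonneg ht ?_) (Finset.sum_nonneg fun l _ => mul_nonneg (hm l) ?_)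
  · simp only [map_add, map_smul, repr_self, Finsupp.add_apply, Finsupp.smul_apply,
      Finsupp.single_apply, smul_eq_mul]
    split_ifs <;> positivity
  · simp only [repr_self, Finsupp.single_apply]
    split_ifs <;> simp

theorem exists_eq_smul_add_sum_of_repr_nonneg (ha : 0 < a) (hij : i ≠ j) {x : M}
    (hratio : b * e.repr x i = a * e.repr x j) (hx : ∀ k, 0 ≤ e.repr x k) :
    ∃ (t : R) (m : ι → R), 0 ≤ t ∧ (∀ k, 0 ≤ m k) ∧
      x = t • (a • e i + b • e j) + ∑ k ∈ Finset.univ \ {i, j}, m k • e k := by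
  refine ⟨e.repr x i / a, fun k => e.repr x k, div_nonneg (hx i) ha.le, hx, ?_⟩
  have hi : e.repr x i / a * a = e.repr x i := div_mul_cancel₀ _ ha.ne'
  have hj : e.repr x i / a * b = e.repr x j := by
    rw [div_mul_eq_mul_div, mul_comm, hratio, mul_div_cancel_left₀ _ ha.ne']
  have hpair : (e.repr x i / a) • (a • e i + b • e j) =
      ∑ k ∈ {i, j}, e.repr x k • e k := by
    rw [Finset.sum_pair hij, smul_add, smul_smul, smul_smul, hi, hj]
  rw [hpair, add_comm, Finset.sum_sdiff (Finset.subset_univ _), e.sum_repr]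

end LinearOrderedField

end Module.Basis

theorem subsystem_root_poset_general {V : Type*} [NormedAddCommGroup V] [InnerProductSpace ℝ V]
    {ι : Type*} [Fintype ι] [DecidableEq ι] (R : RootSystemData V) (B : RootBase R ι)
    (i j : ι) (hij : i ≠ j) (a b : ℕ) (ha : 0 < a) :
    ∀ γ γ' : V, B.IsPos γ →
      γ ∈ (Submodule.span ℝ ({(a : ℝ) • B.b i + (b : ℝ) • B.b j} ∪
            (Set.range B.b \ {B.b i, B.b j})) : Set V) →
      B.IsPos γ' →
      γ' ∈ (Submodule.span ℝ ({(a : ℝ) • B.b i + (b : ℝ) • B.b j} ∪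
            (Set.range B.b \ {B.b i, B.b j})) : Set V) →
      ((∃ (t : ℝ) (m : ι → ℝ), 0 ≤ t ∧ (∀ k, 0 ≤ m k) ∧
          γ' - γ = t • ((a : ℝ) • B.b i + (b : ℝ) • B.b j) +
            ∑ k ∈ Finset.univ \ {i, j}, m k • B.b k) ↔ B.rle γ γ') := by
  intro γ γ' _ hγ _ hγ'
  have hrle : B.rle γ γ' ↔ ∀ k, 0 ≤ B.b.repr (γ' - γ) k := by
    simp [RootBase.rle]
  rw [hrle]
  constructor
  · rintro ⟨t, m, ht, hm, hdiff⟩ k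
    rw [hdiff]
    exact B.b.repr_smul_add_sum_nonneg (Nat.cast_nonneg a) (Nat.cast_nonneg b) ht hm k
  · exact B.b.exists_eq_smul_add_sum_of_repr_nonneg (Nat.cast_pos.mpr ha) hij
      (B.b.mul_repr_eq_of_mem_span_pair_smul_add hij (Submodule.sub_mem _ hγ' hγ))

/-- With Δ' = {aα + bβ} ∪ Δ \ {α, β} and Φ'⁺ = Φ⁺ ∩ span Δ', the root poset on Φ'⁺,
defined coordinatewise over Δ', coincides with the order induced from the root poset on
Φ⁺: for γ, γ' ∈ Φ'⁺, the difference γ' - γ is a nonnegative combination of Δ' iff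
γ ≤ γ' coordinatewise over Δ. -/
theorem subsystem_root_poset {V : Type*} [NormedAddCommGroup V] [InnerProductSpace ℝ V]
    {ι : Type*} [Fintype ι] [DecidableEq ι] (R : RootSystemData V) (B : RootBase R ι)
    (i j : ι) (hij : i ≠ j) (a b : ℕ) (ha : 0 < a) (hb : 0 < b)
    (hroot : B.IsPos ((a : ℝ) • B.b i + (b : ℝ) • B.b j)) :
    ∀ γ γ' : V, B.IsPos γ →
      γ ∈ (Submodule.span ℝ ({(a : ℝ) • B.b i + (b : ℝ) • B.b j} ∪
            (Set.range B.b \ {B.b i, B.b j})) : Set V) →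
      B.IsPos γ' →
      γ' ∈ (Submodule.span ℝ ({(a : ℝ) • B.b i + (b : ℝ) • B.b j} ∪
            (Set.range B.b \ {B.b i, B.b j})) : Set V) →
      ((∃ (t : ℝ) (m : ι → ℝ), 0 ≤ t ∧ (∀ k, 0 ≤ m k) ∧
          γ' - γ = t • ((a : ℝ) • B.b i + (b : ℝ) • B.b j) +
            ∑ k ∈ Finset.univ \ {i, j}, m k • B.b k) ↔ B.rle γ γ') :=
  subsystem_root_poset_general R B i j hij a b ha
end

section
/- Every order ideal of a chain peelable finite poset is chain peelable. -/
/-- A set `s` (with order relation `r`) is *chain peelable* if it is a chain, or an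
order filter of `s` which is a chain containing a minimal element of `s` can be removed,
leaving a chain peelable set. -/
inductive ChainPeelable {α : Type*} (r : α → α → Prop) : Set α → Prop
  | chain (s : Set α) (h : IsChain r s) : ChainPeelable r s
  | peel (s F : Set α) (hFs : F ⊆ s) (hchain : IsChain r F)
      (hfilter : ∀ x ∈ F, ∀ y ∈ s, r x y → y ∈ F)
      (hmin : ∃ m ∈ F, ∀ y ∈ s, r y m → y = m)
      (hrest : ChainPeelable r (s \ F)) : ChainPeelable r s

/-!
Induct on the peeling of `s`. If the peeled chain `F` misses the ideal `I`, then `I` is an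
ideal of `s \ F`. Otherwise `I ∩ F` is a chain and an order filter of `I`; it contains the
minimal element `m` of `F`, because `F` is a chain, so `m` lies below any element of `I ∩ F`.
What remains, `I \ F`, is an ideal of `s \ F`.
-/

section

variable {α : Type*} {r : α → α → Prop}

theorem IsChain.min_mem_of_inter_nonempty {s F I : Set α} {m : α} (hchain : IsChain r F)
    (hIs : I ⊆ s) (hideal : ∀ x ∈ I, ∀ y ∈ s, r y x → y ∈ I) (hms : m ∈ s) (hmF : m ∈ F)
    (hmin : ∀ y ∈ s, r y m → y = m) (hIF : (I ∩ F).Nonempty) : m ∈ I := by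
  obtain ⟨x, hxI, hxF⟩ := hIF
  rcases eq_or_ne x m with rfl | hne
  · exact hxI
  rcases hchain hmF hxF hne.symm with hmx | hxm
  · exact hideal x hxI m hms hmx
  · exact absurd (hmin x (hIs hxI) hxm) hne

theorem ChainPeelable.of_ideal {s : Set α} (h : ChainPeelable r s) {I : Set α} (hIs : I ⊆ s)
    (hideal : ∀ x ∈ I, ∀ y ∈ s, r y x → y ∈ I) : ChainPeelable r I := by
  induction h generalizing I with
  | chain s hs => exact .chain I (hs.mono hIs)
  | peel s F hFs hchain hfilter hmin _ ih =>
    by_cases hIF : (I ∩ F).Nonempty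
    · obtain ⟨m, hmF, hmmin⟩ := hmin
      have hmI : m ∈ I :=
        hchain.min_mem_of_inter_nonempty hIs hideal (hFs hmF) hmF hmmin hIF
      have hrest : ChainPeelable r (I \ F) :=
        ih (Set.sdiff_subset_sdiff_left hIs) fun x hx y hy hyx => ⟨hideal x hx.1 y hy.1 hyx, hy.2⟩
      refine .peel I (I ∩ F) Set.inter_subset_left (hchain.mono Set.inter_subset_right)
        (fun x hx y hy hxy => ⟨hy, hfilter x hx.2 y (hIs hy) hxy⟩)
        ⟨m, ⟨hmI, hmF⟩, fun y hy hym => hmmin y (hIs hy) hym⟩ ?_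
      rwa [Set.sdiff_self_inter]
    · have hIsF : I ⊆ s \ F := fun z hz => ⟨hIs hz, fun hzF => hIF ⟨z, hz, hzF⟩⟩
      exact ih hIsF fun x hx y hy hyx => hideal x hx y hy.1 hyx

end

theorem chainPeelable_of_ideal_general {α : Type*} [PartialOrder α]
    (s I : Set α) (hIs : I ⊆ s)
    (hideal : ∀ x ∈ I, ∀ y ∈ s, y ≤ x → y ∈ I)
    (h : ChainPeelable (· ≤ ·) s) : ChainPeelable (· ≤ ·) I :=
  h.of_ideal hIs hideal

/-- Every order ideal of a chain peelable finite poset is chain peelable. -/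
theorem chainPeelable_of_ideal {α : Type*} [PartialOrder α]
    (s I : Set α) (hfin : s.Finite) (hIs : I ⊆ s)
    (hideal : ∀ x ∈ I, ∀ y ∈ s, y ≤ x → y ∈ I)
    (h : ChainPeelable (· ≤ ·) s) : ChainPeelable (· ≤ ·) I :=
  chainPeelable_of_ideal_general s I hIs hideal h
end

section
/- If a finite crystallographic root system Φ is simply laced and an order ideal I ⊆ Φ⁺ of the root poset is not a star ideal, then every root γ ∈ I has support forming a path in the Dynkin diagram and all nonzero coordinates of γ equal to 1. -/
open scoped RealInnerProductSpace

/-!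
Every root `γ` of `I` is the sum of the simple roots along an induced path of the Dynkin diagram,
by induction on the height. A non-simple positive root `γ` has `⟪γ, αᵢ⟫ > 0` for some simple `αᵢ`,
so `δ = γ - αᵢ` is a smaller root of the ideal, a path sum by induction. All roots having the same
length forces `⟪δ, αᵢ⟫ = -‖αᵢ‖² / 2`, i.e. `i` is off the path and has exactly one neighbour on it.
If that neighbour is an end, the path grows by `i`; otherwise it is the centre of a claw whose three
two-edge paths give the three roots `αᵢ + αⱼ + αₖ ≤ γ` of a star ideal.
-/

namespace SimpleGraph

variable {ι : Type*} (G : SimpleGraph ι)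

def IsInducedPath (l : List ι) : Prop :=
  l.Nodup ∧ ∀ (p q : ℕ) (hp : p < l.length) (hq : q < l.length),
    G.Adj l[p] l[q] ↔ (p + 1 = q ∨ q + 1 = p)

def IsClaw (a u b v : ι) : Prop :=
  [a, u, b, v].Nodup ∧ G.Adj a u ∧ G.Adj u b ∧ G.Adj u v ∧
    ¬ G.Adj a b ∧ ¬ G.Adj a v ∧ ¬ G.Adj b v

variable {G} {l : List ι}

theorem isInducedPath_singleton (v : ι) : G.IsInducedPath [v] :=
  ⟨List.nodup_singleton v, fun p q hp hq => by
    obtain rfl : p = 0 := by simpa using hp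
    obtain rfl : q = 0 := by simpa using hq
    simp⟩

namespace IsInducedPath

theorem isChain (hl : G.IsInducedPath l) : l.IsChain G.Adj :=
  List.isChain_iff_getElem.2 fun p hp => (hl.2 p (p + 1) (by omega) hp).2 (Or.inl rfl)

theorem not_adj (hl : G.IsInducedPath l) {p q : ℕ} (hp : p < l.length) (hq : q < l.length)
    (hpq : p + 1 < q) : ¬ G.Adj l[p] l[q] := fun h => by
  have := (hl.2 p q hp hq).1 h
  omega

theorem reverse (hl : G.IsInducedPath l) : G.IsInducedPath l.reverse := by
  refine ⟨List.nodup_reverse.2 hl.1, fun p q hp hq => ?_⟩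
  simp only [List.length_reverse] at hp hq
  simp only [List.getElem_reverse]
  rw [hl.2 _ _ (by omega) (by omega)]
  omega

theorem cons (hl : G.IsInducedPath l) {v : ι} (hv : v ∉ l) (h0 : 0 < l.length)
    (hnbr : ∀ w ∈ l, G.Adj v w ↔ w = l[0]) : G.IsInducedPath (v :: l) := by
  have hfirst : ∀ (q : ℕ) (hq : q < l.length), G.Adj v l[q] ↔ q = 0 := fun q hq => by
    rw [hnbr _ (List.getElem_mem hq), hl.1.getElem_inj_iff]
  refine ⟨List.nodup_cons.2 ⟨hv, hl.1⟩, fun p q hp hq => ?_⟩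
  simp only [List.length_cons] at hp hq
  rcases p with _ | p <;> rcases q with _ | q
  · simp
  · simp only [List.getElem_cons_zero, List.getElem_cons_succ, hfirst]
    omega
  · simp only [List.getElem_cons_zero, List.getElem_cons_succ, G.adj_comm _ v, hfirst]
    omega
  · simp only [List.getElem_cons_succ, hl.2 p q (by omega) (by omega)]
    omega

theorem card_neighbors_le_two [DecidableEq ι] [DecidableRel G.Adj] (hl : G.IsInducedPath l)
    {v : ι} (hv : v ∈ l) : (l.toFinset.filter (G.Adj v)).card ≤ 2 := by
  obtain ⟨m, hm, rfl⟩ := List.mem_iff_getElem.1 hv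
  calc (l.toFinset.filter (G.Adj l[m])).card
      ≤ ({l.getD (m - 1) l[m], l.getD (m + 1) l[m]} : Finset ι).card := by
        refine Finset.card_le_card fun w hw => ?_
        obtain ⟨hwl, hadj⟩ := Finset.mem_filter.1 hw
        obtain ⟨p, hp, rfl⟩ := List.mem_iff_getElem.1 (List.mem_toFinset.1 hwl)
        rcases (hl.2 m p hm hp).1 hadj with rfl | rfl
        · simp [List.getElem?_eq_getElem hp]
        · simp [List.getElem?_eq_getElem hp]
    _ ≤ 2 := Finset.card_le_two

theorem extend_or_isClaw (hl : G.IsInducedPath l) {u v : ι} (hv : v ∉ l) (hu : u ∈ l)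
    (hnbr : ∀ w ∈ l, G.Adj v w ↔ w = u) :
    (∃ l' : List ι, G.IsInducedPath l' ∧ ∀ w, w ∈ l' ↔ w = v ∨ w ∈ l) ∨
      ∃ a ∈ l, ∃ b ∈ l, G.IsClaw a u b v := by
  obtain ⟨m, hm, rfl⟩ := List.mem_iff_getElem.1 hu
  have hne : ∀ (p : ℕ) (hp : p < l.length), p ≠ m → l[p] ≠ l[m] := fun p hp hpm h =>
    hpm ((hl.1.getElem_inj_iff).1 h)
  by_cases hm0 : m = 0
  · subst hm0
    exact Or.inl ⟨v :: l, hl.cons hv hm hnbr, by simp⟩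
  by_cases hmlast : m + 1 = l.length
  · refine Or.inl ⟨(v :: l.reverse).reverse, (hl.reverse.cons (by simpa using hv)
      (by rw [List.length_reverse]; omega) fun w hw => ?_).reverse, by simp [or_comm]⟩
    simp only [List.getElem_reverse]
    rw [hnbr w (List.mem_reverse.1 hw)]
    simp only [show l.length - 1 - 0 = m by omega]
  right
  refine ⟨l[m - 1], List.getElem_mem _, l[m + 1], List.getElem_mem _, ?_⟩
  have hadj : ∀ (p q : ℕ) (hp : p < l.length) (hq : q < l.length), p + 1 = q ∨ q + 1 = p →
      G.Adj l[p] l[q] := fun p q hp hq h => (hl.2 p q hp hq).2 h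
  have hnv : ∀ (p : ℕ) (hp : p < l.length), l[p] ≠ v := fun p hp h =>
    hv (h ▸ List.getElem_mem hp)
  refine ⟨?_, hadj _ _ _ _ (by omega), hadj _ _ _ _ (by omega), ((hnbr _ hu).2 rfl).symm,
    hl.not_adj _ _ (by omega),
    fun h => hne (m - 1) _ (by omega) ((hnbr _ (List.getElem_mem _)).1 h.symm),
    fun h => hne (m + 1) _ (by omega) ((hnbr _ (List.getElem_mem _)).1 h.symm)⟩
  simp only [List.nodup_cons, List.mem_cons, List.not_mem_nil, List.nodup_nil, or_false,
    not_or, hl.1.getElem_inj_iff]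
  refine ⟨⟨?_, ?_, hnv _ _⟩, ⟨?_, hnv _ _⟩, hnv _ _, not_false, trivial⟩ <;> omega

end IsInducedPath

end SimpleGraph

namespace RootSystemData

variable {V : Type*} [NormedAddCommGroup V] [InnerProductSpace ℝ V] {R : RootSystemData V}

theorem inner_self_pos {α : V} (hα : α ∈ R.Φ) : 0 < ⟪α, α⟫ :=
  real_inner_self_pos.2 (R.nonzero α hα)

namespace SimplyLaced

variable (hSL : R.SimplyLaced) {α β : V}
include hSL

/-- The Cartan integer `2⟪α, β⟫ / ⟪α, α⟫` lies strictly between `-2` and `0`, since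
`‖α + β‖² = 2⟪α, α⟫ + 2⟪α, β⟫ > 0`. -/
theorem inner_eq_neg_half (hα : α ∈ R.Φ) (hβ : β ∈ R.Φ) (hneg : ⟪α, β⟫ < 0) (hne : α + β ≠ 0) :
    ⟪α, β⟫ = -⟪α, α⟫ / 2 := by
  have hc := inner_self_pos hα
  have hsum : 0 < ⟪α + β, α + β⟫ := real_inner_self_pos.2 hne
  rw [inner_add_add_self, real_inner_comm α β, hSL β hβ α hα] at hsum
  obtain ⟨n, hn⟩ := R.crystallographic α hα β hβ
  have hn_lt : (n : ℝ) < 0 := by rw [← hn]; exact div_neg_of_neg_of_pos (by linarith) hc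
  have hn_gt : (-2 : ℝ) < n := by rw [← hn, lt_div_iff₀ hc]; linarith
  have hn1 : n = -1 := by
    have : n < 0 := by exact_mod_cast hn_lt
    have : -2 < n := by exact_mod_cast hn_gt
    omega
  rw [hn1, div_eq_iff hc.ne'] at hn
  push_cast at hn
  linarith

theorem add_mem (hα : α ∈ R.Φ) (hβ : β ∈ R.Φ) (hneg : ⟪α, β⟫ < 0) (hne : α + β ≠ 0) :
    α + β ∈ R.Φ := by
  have hcoef : 2 * ⟪α, β⟫ / ⟪α, α⟫ = -1 := by
    rw [div_eq_iff (inner_self_pos hα).ne', hSL.inner_eq_neg_half hα hβ hneg hne]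
    ring
  have h := R.reflect_mem α hα β hβ
  rwa [hcoef, neg_one_smul, sub_neg_eq_add, add_comm] at h

theorem sub_mem (hα : α ∈ R.Φ) (hβ : β ∈ R.Φ) (hpos : 0 < ⟪α, β⟫) (hne : α ≠ β) :
    α - β ∈ R.Φ := by
  rw [sub_eq_add_neg]
  exact hSL.add_mem hα (R.neg_mem β hβ) (by rwa [inner_neg_right, neg_lt_zero])
    (by rwa [← sub_eq_add_neg, sub_ne_zero])

end SimplyLaced

end RootSystemData

namespace RootBase

variable {V : Type*} [NormedAddCommGroup V] [InnerProductSpace ℝ V]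
  {R : RootSystemData V} {ι : Type*} [Fintype ι] (B : RootBase R ι)

def dynkinDiagram : SimpleGraph ι where
  Adj i j := i ≠ j ∧ ⟪B.b i, B.b j⟫ ≠ 0
  symm := ⟨fun _ _ h => ⟨h.1.symm, by rw [real_inner_comm]; exact h.2⟩⟩
  loopless := ⟨fun _ h => h.1 rfl⟩

def IsOrderIdeal (I : Set V) : Prop :=
  I ⊆ B.Pos ∧ ∀ γ ∈ I, ∀ δ, B.IsPos δ → B.rle δ γ → δ ∈ I

def IsStarIdeal (I : Set V) : Prop :=
  ∃ i₁ i₂ i₃ i₄ : ι, ([i₁, i₂, i₃, i₄] : List ι).Nodup ∧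
    B.b i₁ + B.b i₂ + B.b i₃ ∈ R.Φ ∩ I ∧
    B.b i₁ + B.b i₂ + B.b i₄ ∈ R.Φ ∩ I ∧
    B.b i₂ + B.b i₃ + B.b i₄ ∈ R.Φ ∩ I

variable {B}

theorem repr_sum_simple [DecidableEq ι] (s : Finset ι) (k : ι) :
    B.b.repr (∑ j ∈ s, B.b j) k = if k ∈ s then 1 else 0 := by
  simp [map_sum, Finsupp.single_apply]

theorem inner_simple_nonpos (hSL : R.SimplyLaced) {i j : ι} (hij : i ≠ j) :
    ⟪B.b i, B.b j⟫ ≤ 0 := by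
  by_contra! hpos
  have hsub := hSL.sub_mem (B.simple_mem i) (B.simple_mem j) hpos (B.b.injective.ne hij)
  rcases B.coord_sign _ hsub with h | h
  · exact absurd (h j) (by simp [hij])
  · exact absurd (h i) (by simp [hij])

theorem inner_simple_of_adj (hSL : R.SimplyLaced) {i j : ι} (h : B.dynkinDiagram.Adj i j) :
    ⟪B.b i, B.b j⟫ = -⟪B.b i, B.b i⟫ / 2 := by
  refine hSL.inner_eq_neg_half (B.simple_mem i) (B.simple_mem j)
    ((inner_simple_nonpos hSL h.1).lt_of_ne h.2) fun h0 => ?_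
  simpa [Finsupp.single_apply, h.1, h.1.symm] using congrArg (B.b.repr · i) h0

theorem inner_simple_eq_zero {i j : ι} (hij : i ≠ j) (h : ¬ B.dynkinDiagram.Adj i j) :
    ⟪B.b i, B.b j⟫ = 0 :=
  not_not.1 fun h0 => h ⟨hij, h0⟩

theorem inner_sum_simple [DecidableEq ι] [DecidableRel B.dynkinDiagram.Adj]
    (hSL : R.SimplyLaced) (s : Finset ι) (i : ι) :
    ⟪∑ j ∈ s, B.b j, B.b i⟫ =
      ((if i ∈ s then 2 else 0) - (s.filter (B.dynkinDiagram.Adj i)).card) *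
        (⟪B.b i, B.b i⟫ / 2) := by
  have hterm : ∀ j, ⟪B.b j, B.b i⟫ =
      ((if i = j then 2 else 0) - if B.dynkinDiagram.Adj i j then 1 else 0) *
        (⟪B.b i, B.b i⟫ / 2) := by
    intro j
    by_cases hij : i = j
    · subst hij
      rw [if_pos rfl, if_neg (SimpleGraph.irrefl _)]
      ring
    by_cases hadj : B.dynkinDiagram.Adj i j
    · rw [real_inner_comm, inner_simple_of_adj hSL hadj, if_neg hij, if_pos hadj]
      ring
    · rw [real_inner_comm, inner_simple_eq_zero hij hadj, if_neg hij, if_neg hadj]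
      ring
  rw [sum_inner, Finset.sum_congr rfl fun j _ => hterm j, ← Finset.sum_mul, Finset.sum_sub_distrib,
    Finset.sum_ite_eq, Finset.sum_boole]

theorem add_add_mem (hSL : R.SimplyLaced) {x y z : ι} (hxy : B.dynkinDiagram.Adj x y)
    (hyz : B.dynkinDiagram.Adj y z) (hxz : x ≠ z) (hxz' : ¬ B.dynkinDiagram.Adj x z) :
    B.b x + B.b y + B.b z ∈ R.Φ := by
  have hneg : ∀ {i j : ι}, B.dynkinDiagram.Adj i j → ⟪B.b i, B.b j⟫ < 0 := fun h =>
    (inner_simple_nonpos hSL h.1).lt_of_ne h.2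
  have hxy_mem := hSL.add_mem (B.simple_mem x) (B.simple_mem y) (hneg hxy) fun h0 => by
    simpa [Finsupp.single_apply, hxy.1] using congrArg (B.b.repr · y) h0
  have hxyz : ⟪B.b x + B.b y, B.b z⟫ < 0 := by
    rw [inner_add_left, inner_simple_eq_zero hxz hxz', zero_add]
    exact hneg hyz
  refine hSL.add_mem hxy_mem (B.simple_mem z) hxyz fun h0 => ?_
  simpa [Finsupp.single_apply, hxy.1, hyz.1.symm] using congrArg (B.b.repr · y) h0

theorem exists_inner_simple_pos {γ : V} (hγ : B.IsPos γ) : ∃ i, 0 < ⟪γ, B.b i⟫ := by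
  by_contra! h
  have hexp : ⟪γ, γ⟫ = ∑ j, B.b.repr γ j * ⟪γ, B.b j⟫ := by
    calc ⟪γ, γ⟫ = ⟪γ, ∑ j, B.b.repr γ j • B.b j⟫ := by rw [B.b.sum_repr]
      _ = _ := by simp only [inner_sum, real_inner_smul_right]
  have := RootSystemData.inner_self_pos hγ.1
  have : ∑ j, B.b.repr γ j * ⟪γ, B.b j⟫ ≤ 0 :=
    Finset.sum_nonpos fun j _ => mul_nonpos_of_nonneg_of_nonpos (hγ.2 j) (h j)
  linarith

/-- If `γ - αᵢ` were negative, `γ` would be a multiple of `αᵢ`, hence `αᵢ` itself since the root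
system is reduced. -/
theorem isPos_sub_simple {γ : V} (hγ : B.IsPos γ) {i : ι} (hne : γ ≠ B.b i)
    (hsub : γ - B.b i ∈ R.Φ) : B.IsPos (γ - B.b i) := by
  classical
  refine ⟨hsub, (B.coord_sign _ hsub).resolve_right fun hneg => hne ?_⟩
  have hzero : ∀ j, j ≠ i → B.b.repr γ j = 0 := fun j hj => by
    have := hneg j
    simp only [map_sub, Finsupp.sub_apply, B.b.repr_self, Finsupp.single_apply, if_neg hj.symm,
      sub_zero] at this
    exact le_antisymm this (hγ.2 j)
  have hγ_eq : γ = B.b.repr γ i • B.b i := B.b.ext_elem fun j => by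
    by_cases hj : j = i
    · subst hj; simp
    · simp [hzero j hj, Ne.symm hj]
  rcases R.reduced _ (B.simple_mem i) _ (hγ_eq ▸ hγ.1) with h1 | h1
  · rw [hγ_eq, h1, one_smul]
  · have := hγ.2 i
    linarith

variable {I : Set V}

theorem IsOrderIdeal.sum_simple_mem (hI : B.IsOrderIdeal I) {s t : Finset ι} (hts : t ⊆ s)
    (ht : ∑ j ∈ t, B.b j ∈ R.Φ) (hs : ∑ j ∈ s, B.b j ∈ I) : ∑ j ∈ t, B.b j ∈ I := by
  classical
  refine hI.2 _ hs _ ⟨ht, fun k => ?_⟩ fun k => ?_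
  · rw [repr_sum_simple]
    split_ifs <;> norm_num
  · simp only [repr_sum_simple]
    split_ifs with hk hk' <;> first | exact absurd (hts hk) hk' | norm_num

/-- The three roots of a star ideal are the sums along the three two-edge paths of a claw. -/
theorem isStarIdeal_of_isClaw (hSL : R.SimplyLaced) (hI : B.IsOrderIdeal I) {a u c v : ι}
    (hclaw : B.dynkinDiagram.IsClaw a u c v) {s : Finset ι} (hs : ∑ j ∈ s, B.b j ∈ I)
    (ha : a ∈ s) (hu : u ∈ s) (hc : c ∈ s) (hv : v ∈ s) : B.IsStarIdeal I := by
  classical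
  obtain ⟨hnd, hau, huc, huv, hac, hav, hcv⟩ := hclaw
  simp only [List.nodup_cons, List.mem_cons, List.not_mem_nil, List.nodup_nil, or_false,
    not_or] at hnd
  obtain ⟨⟨hau', hac', hav'⟩, ⟨huc', huv'⟩, hcv', -⟩ := hnd
  have hmem : ∀ {x y z : ι}, x ≠ y → x ≠ z → y ≠ z → x ∈ s → y ∈ s → z ∈ s →
      B.b x + B.b y + B.b z ∈ R.Φ → B.b x + B.b y + B.b z ∈ R.Φ ∩ I := by
    intro x y z hxy hxz hyz hx hy hz h
    have hsum : ∑ j ∈ {x, y, z}, B.b j = B.b x + B.b y + B.b z := by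
      rw [Finset.sum_insert (by simp [hxy, hxz]), Finset.sum_pair hyz, add_assoc]
    refine ⟨h, hsum ▸ hI.sum_simple_mem ?_ (hsum ▸ h) hs⟩
    simp [Finset.insert_subset_iff, hx, hy, hz]
  refine ⟨a, u, c, v, by simp [*], hmem hau' hac' huc' ha hu hc (add_add_mem hSL hau huc hac' hac),
    hmem hau' hav' huv' ha hu hv (add_add_mem hSL hau huv hav' hav),
    hmem huc' huv' hcv' hu hc hv ?_⟩
  rw [add_comm (B.b u)]
  exact add_add_mem hSL huc.symm huv hcv' hcv

/-- Adding a simple root `αᵢ` to a path root `δ` gives a root only if `⟪δ, αᵢ⟫ = -‖αᵢ‖² / 2`: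
then `i` has exactly one neighbour on the path (three if `i` lay on it, which a path does not
allow), and that neighbour is an end of the path unless it is the centre of a claw. -/
theorem exists_inducedPath_of_add_simple [DecidableEq ι] (hSL : R.SimplyLaced)
    (hI : B.IsOrderIdeal I) (hstar : ¬ B.IsStarIdeal I) {l : List ι}
    (hl : B.dynkinDiagram.IsInducedPath l)
    (hδ : ∑ j ∈ l.toFinset, B.b j ∈ R.Φ) {i : ι} (hγ : ∑ j ∈ l.toFinset, B.b j + B.b i ∈ I) :
    ∃ l' : List ι, B.dynkinDiagram.IsInducedPath l' ∧
      ∑ j ∈ l.toFinset, B.b j + B.b i = ∑ j ∈ l'.toFinset, B.b j := by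
  classical
  set δ := ∑ j ∈ l.toFinset, B.b j
  have hδi : ⟪δ, B.b i⟫ = -1 * (⟪B.b i, B.b i⟫ / 2) := by
    have hγγ := hSL _ (hI.1 hγ).1 _ (B.simple_mem i)
    rw [inner_add_add_self, hSL δ hδ _ (B.simple_mem i), real_inner_comm δ] at hγγ
    linarith
  have hcount := hδi
  rw [inner_sum_simple hSL, mul_left_inj'
    (div_ne_zero (RootSystemData.inner_self_pos (B.simple_mem i)).ne' two_ne_zero)] at hcount
  by_cases hil : i ∈ l
  · have hcard := hl.card_neighbors_le_two (G := B.dynkinDiagram) hil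
    rw [if_pos (List.mem_toFinset.2 hil)] at hcount
    have : ((l.toFinset.filter (B.dynkinDiagram.Adj i)).card : ℝ) ≤ 2 := by exact_mod_cast hcard
    linarith
  rw [if_neg (mt List.mem_toFinset.1 hil)] at hcount
  obtain ⟨u, hu⟩ := Finset.card_eq_one.1 (show (l.toFinset.filter (B.dynkinDiagram.Adj i)).card = 1
    by exact_mod_cast (by linarith : ((l.toFinset.filter (B.dynkinDiagram.Adj i)).card : ℝ) = 1))
  have hnbr : ∀ w ∈ l, B.dynkinDiagram.Adj i w ↔ w = u := fun w hw => by
    simpa [hw] using Finset.ext_iff.1 hu w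
  have hul : u ∈ l := List.mem_toFinset.1 (Finset.mem_filter.1 (hu ▸ Finset.mem_singleton_self u)).1
  have hγ_eq : δ + B.b i = ∑ j ∈ insert i l.toFinset, B.b j := by
    rw [Finset.sum_insert (mt List.mem_toFinset.1 hil), add_comm]
  rcases hl.extend_or_isClaw hil hul hnbr with ⟨l', hl', hmem⟩ | ⟨a, ha, c, hc, hclaw⟩
  · refine ⟨l', hl', hγ_eq.trans (Finset.sum_congr ?_ fun _ _ => rfl)⟩
    ext w
    simp [hmem]
  · rw [hγ_eq] at hγ
    exact absurd (isStarIdeal_of_isClaw hSL hI hclaw hγ (by simp [ha]) (by simp [hul])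
      (by simp [hc]) (Finset.mem_insert_self _ _)) hstar

theorem exists_inducedPath_sum_eq [DecidableEq ι] (hSL : R.SimplyLaced) (hI : B.IsOrderIdeal I)
    (hstar : ¬ B.IsStarIdeal I) {γ : V} (hγ : γ ∈ I) :
    ∃ l : List ι, B.dynkinDiagram.IsInducedPath l ∧ γ = ∑ j ∈ l.toFinset, B.b j := by
  obtain ⟨n, hn⟩ := exists_nat_gt (∑ j, B.b.repr γ j)
  induction n generalizing γ with
  | zero =>
    exact absurd hn (not_lt.2 (by simpa using Finset.sum_nonneg fun j _ => (hI.1 hγ).2 j))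
  | succ n ih =>
    obtain ⟨i, hi⟩ := exists_inner_simple_pos (hI.1 hγ)
    by_cases hγi : γ = B.b i
    · exact ⟨[i], SimpleGraph.isInducedPath_singleton i, by simp [hγi]⟩
    have hsub := hSL.sub_mem (hI.1 hγ).1 (B.simple_mem i) hi hγi
    have hδI : γ - B.b i ∈ I := hI.2 γ hγ _ (isPos_sub_simple (hI.1 hγ) hγi hsub) fun k => by
      simp only [map_sub, Finsupp.sub_apply, B.b.repr_self, Finsupp.single_apply]
      split_ifs <;> norm_num
    have hheight : ∑ j, B.b.repr (γ - B.b i) j < n := by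
      simp only [map_sub, Finsupp.sub_apply, B.b.repr_self, Finset.sum_sub_distrib,
        Finsupp.single_apply, Finset.sum_ite_eq, Finset.mem_univ, if_true]
      push_cast at hn
      linarith
    obtain ⟨l, hl, hδ⟩ := ih hδI hheight
    obtain ⟨l', hl', h'⟩ := exists_inducedPath_of_add_simple hSL hI hstar hl (hδ ▸ hsub)
      (by rw [← hδ, sub_add_cancel]; exact hγ)
    exact ⟨l', hl', by rw [← h', ← hδ, sub_add_cancel]⟩

end RootBase

/-- In a simply laced root system, if an order ideal I of the root poset is not a star
ideal, then every root in I has all coordinates 0 or 1, and its support is a path in the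
Dynkin diagram. -/
theorem not_star_ideal_path {V : Type*} [NormedAddCommGroup V] [InnerProductSpace ℝ V]
    {ι : Type*} [Fintype ι] (R : RootSystemData V) (B : RootBase R ι)
    (hSL : R.SimplyLaced)
    (I : Set V) (hI : I ⊆ B.Pos)
    (hideal : ∀ γ ∈ I, ∀ δ, B.IsPos δ → B.rle δ γ → δ ∈ I)
    (hstar : ¬ ∃ i₁ i₂ i₃ i₄ : ι, ([i₁, i₂, i₃, i₄] : List ι).Nodup ∧
        B.b i₁ + B.b i₂ + B.b i₃ ∈ R.Φ ∩ I ∧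
        B.b i₁ + B.b i₂ + B.b i₄ ∈ R.Φ ∩ I ∧
        B.b i₂ + B.b i₃ + B.b i₄ ∈ R.Φ ∩ I) :
    ∀ γ ∈ I, (∀ i, B.b.repr γ i = 0 ∨ B.b.repr γ i = 1) ∧
      ∃ l : List ι, l.Nodup ∧ (∀ i, B.b.repr γ i ≠ 0 ↔ i ∈ l) ∧
        l.Chain' (fun p q => p ≠ q ∧ ⟪B.b p, B.b q⟫ ≠ 0) ∧
        (∀ (p q : ℕ) (hp : p < l.length) (hq : q < l.length), p + 1 < q →
          ⟪B.b (l.get ⟨p, hp⟩), B.b (l.get ⟨q, hq⟩)⟫ = 0) := by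
  classical
  intro γ hγ
  obtain ⟨l, hl, rfl⟩ := B.exists_inducedPath_sum_eq hSL ⟨hI, hideal⟩ hstar hγ
  refine ⟨fun k => ?_, l, hl.1, fun k => ?_, hl.isChain, fun p q hp hq hpq => ?_⟩
  · rw [RootBase.repr_sum_simple]
    split_ifs <;> simp
  · rw [RootBase.repr_sum_simple]
    simp
  · exact RootBase.inner_simple_eq_zero (fun h => by have := hl.1.getElem_inj_iff.1 h; omega)
      (hl.not_adj hp hq hpq)
end

section
/- In the root poset of a root system of type Aₙ, every order ideal is chain peelable. -/
namespace ChainPeelable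

variable {α : Type*} {r : α → α → Prop}

theorem of_forall_exists_peel (P : Set α → Prop)
    (step : ∀ t : Set α, t.Finite → P t → t.Nonempty → ∃ F ⊆ t, IsChain r F ∧
      (∀ x ∈ F, ∀ y ∈ t, r x y → y ∈ F) ∧ (∃ m ∈ F, ∀ y ∈ t, r y m → y = m) ∧ P (t \ F))
    {s : Set α} (hs : s.Finite) (hP : P s) : ChainPeelable r s := by
  induction hk : s.ncard using Nat.strong_induction_on generalizing s with
  | _ k ih =>
    obtain rfl | hne := s.eq_empty_or_nonempty
    · exact chain ∅ IsChain.empty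
    obtain ⟨F, hFs, hchain, hfilter, hmin, hrest⟩ := step s hs hP hne
    obtain ⟨m, hmF, hm⟩ := hmin
    have hlt : (s \ F).ncard < k :=
      hk ▸ Set.ncard_lt_ncard (hFs.sdiff_ssubset_of_nonempty ⟨m, hmF⟩) hs
    exact peel s F hFs hchain hfilter ⟨m, hmF, hm⟩ (ih _ hlt hs.sdiff hrest rfl)

end ChainPeelable

section IntervalIdeal

variable {α : Type*} [LinearOrder α]

/-- `p : α × α` stands for the interval `[p.1, p.2]`; `I` is a down-set of nonempty intervals
under inclusion. -/
def IsIntervalIdeal (I : Set (α × α)) : Prop :=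
  (∀ p ∈ I, p.1 ≤ p.2) ∧ ∀ p ∈ I, ∀ q : α × α, q.1 ≤ q.2 → p.1 ≤ q.1 ∧ q.2 ≤ p.2 → q ∈ I

theorem isChain_setOf_fst_eq (i : α) :
    IsChain (fun p q : α × α => q.1 ≤ p.1 ∧ p.2 ≤ q.2) {p | p.1 = i} := by
  intro p hp q hq _
  rcases le_total p.2 q.2 with h | h
  · exact Or.inl ⟨(hq.trans hp.symm).le, h⟩
  · exact Or.inr ⟨(hp.trans hq.symm).le, h⟩

variable {I : Set (α × α)} {i : α}

theorem IsIntervalIdeal.mem_diag (hI : IsIntervalIdeal I) {p : α × α} (hp : p ∈ I) :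
    (p.1, p.1) ∈ I :=
  hI.2 p hp _ le_rfl ⟨le_rfl, hI.1 p hp⟩

theorem IsIntervalIdeal.eq_diag_of_subset (hI : IsIntervalIdeal I) {p : α × α} (hp : p ∈ I)
    (hsub : i ≤ p.1 ∧ p.2 ≤ i) : p = (i, i) :=
  have hp' := hI.1 p hp
  Prod.ext (le_antisymm (hp'.trans hsub.2) hsub.1) (le_antisymm hsub.2 (hsub.1.trans hp'))

theorem IsIntervalIdeal.diff_setOf_fst_eq (hI : IsIntervalIdeal I) (hi : ∀ p ∈ I, i ≤ p.1) :
    IsIntervalIdeal (I \ {p ∈ I | p.1 = i}) := by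
  refine ⟨fun p hp => hI.1 p hp.1, fun p hp q hq hsub => ⟨hI.2 p hp.1 q hq hsub, ?_⟩⟩
  rintro ⟨-, rfl⟩
  have hlt : q.1 < p.1 := lt_of_le_of_ne (hi p hp.1) fun h => hp.2 ⟨hp.1, h.symm⟩
  exact absurd hsub.1 hlt.not_ge

theorem IsIntervalIdeal.chainPeelable (hfin : I.Finite) (hI : IsIntervalIdeal I) :
    ChainPeelable (fun p q : α × α => q.1 ≤ p.1 ∧ p.2 ≤ q.2) I := by
  refine ChainPeelable.of_forall_exists_peel IsIntervalIdeal ?_ hfin hI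
  intro t ht htI hne
  obtain ⟨p, hp, hmin⟩ := Set.exists_min_image t Prod.fst ht hne
  refine ⟨{q ∈ t | q.1 = p.1}, Set.sep_subset _ _,
    (isChain_setOf_fst_eq p.1).mono fun q hq => hq.2, ?_, ?_, htI.diff_setOf_fst_eq hmin⟩
  · intro x hx y hy hxy
    exact ⟨hy, le_antisymm (hx.2 ▸ hxy.1) (hmin y hy)⟩
  · exact ⟨(p.1, p.1), ⟨htI.mem_diag hp, rfl⟩, fun y hy hsub => htI.eq_diag_of_subset hy hsub⟩

end IntervalIdeal

/-- In the type Aₙ root poset (positive roots are the intervals [i, j] of simple roots,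
ordered by inclusion, i.e. coordinatewise), every order ideal is chain peelable. -/
theorem typeA_ideal_chainPeelable (n : ℕ) (I : Set (Fin n × Fin n))
    (hI : ∀ p ∈ I, p.1 ≤ p.2)
    (hideal : ∀ p ∈ I, ∀ q : Fin n × Fin n, q.1 ≤ q.2 →
      (p.1 ≤ q.1 ∧ q.2 ≤ p.2) → q ∈ I) :
    ChainPeelable (fun p q : Fin n × Fin n => q.1 ≤ p.1 ∧ p.2 ≤ q.2) I :=
  IsIntervalIdeal.chainPeelable I.toFinite ⟨hI, hideal⟩
end

section
/- In the root poset of a root system of type Bₙ (n ≥ 2), the full poset Φ⁺ is chain peelable; consequently every order ideal of the type Bₙ root poset is chain peelable. -/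
/-- The standard basis vector eᵢ of ℤⁿ. -/
def eB (n : ℕ) (i : Fin n) : Fin n → ℤ := fun k => if k = i then 1 else 0

/-- The positive roots of type Bₙ: eᵢ, eᵢ - eⱼ and eᵢ + eⱼ for i < j. -/
def PosB (n : ℕ) : Set (Fin n → ℤ) :=
  {v | (∃ i, v = eB n i) ∨ (∃ i j : Fin n, i < j ∧ v = eB n i - eB n j) ∨
    (∃ i j : Fin n, i < j ∧ v = eB n i + eB n j)}

/-- The root poset order of type Bₙ: coordinatewise comparison over the simple roots
αᵢ = eᵢ - eᵢ₊₁ (i < n), αₙ = eₙ, i.e. comparison of all prefix sums. -/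
def rleB (n : ℕ) (v w : Fin n → ℤ) : Prop :=
  ∀ k : Fin n, ∑ i ∈ Finset.univ.filter (· ≤ k), v i ≤ ∑ i ∈ Finset.univ.filter (· ≤ k), w i

/-!
Write `S v k` for the `k`-th prefix sum of `v`, so that `v ≤ w` means `S v ≤ S w` pointwise, and
`S` is nonnegative on positive roots. For `t = 0, 1, …, n - 1` in turn, peel off the roots whose
first nonzero prefix sum sits at `t`. These are `eₜ` and `eₜ ± eⱼ` with `t < j`, which form a
chain; the condition `1 ≤ S v t` is upward closed, so they form an order filter; and, as soon as
one of them lies in the order ideal, so does the simple root `αₜ`, whose prefix sums are the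
indicator of `t`, and `αₜ` is minimal among the positive roots.
-/

namespace TypeB

variable {n : ℕ}

def prefixSum (v : Fin n → ℤ) (k : Fin n) : ℤ := ∑ i ∈ Finset.univ.filter (· ≤ k), v i

theorem rleB_iff_prefixSum {v w : Fin n → ℤ} :
    rleB n v w ↔ ∀ k, prefixSum v k ≤ prefixSum w k := by
  rfl

theorem prefixSum_add (v w : Fin n → ℤ) (k : Fin n) :
    prefixSum (v + w) k = prefixSum v k + prefixSum w k :=
  Finset.sum_add_distrib

theorem prefixSum_sub (v w : Fin n → ℤ) (k : Fin n) :
    prefixSum (v - w) k = prefixSum v k - prefixSum w k :=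
  Finset.sum_sub_distrib _ _

theorem prefixSum_eB (i k : Fin n) : prefixSum (eB n i) k = if i ≤ k then 1 else 0 := by
  simp [prefixSum, eB]

theorem eq_zero_of_prefixSum_eq_zero {v : Fin n → ℤ} (h : ∀ k, prefixSum v k = 0) : v = 0 := by
  by_contra hv
  obtain ⟨k, hk, hmin⟩ := (Finset.univ.filter (v · ≠ 0)).exists_min_image id
    (by simpa [Finset.filter_nonempty_iff, funext_iff] using hv)
  have hvk : v k ≠ 0 := (Finset.mem_filter.mp hk).2
  -- `k` is the first nonzero coordinate, so `v k` is the only nonzero term of `prefixSum v k`.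
  refine hvk (Eq.trans ?_ (h k))
  refine (Finset.sum_eq_single k (fun i hi hik => ?_) (by simp)).symm
  by_contra hvi
  have := hmin i (by simpa using hvi)
  exact hik (le_antisymm (Finset.mem_filter.mp hi).2 this)

theorem prefixSum_injective {v w : Fin n → ℤ} (h : ∀ k, prefixSum v k = prefixSum w k) :
    v = w :=
  sub_eq_zero.mp <| eq_zero_of_prefixSum_eq_zero fun k => by rw [prefixSum_sub, h, sub_self]

theorem prefixSum_nonneg {v : Fin n → ℤ} (hv : v ∈ PosB n) (k : Fin n) : 0 ≤ prefixSum v k := by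
  rcases hv with ⟨i, rfl⟩ | ⟨i, j, hij, rfl⟩ | ⟨i, j, hij, rfl⟩ <;>
    simp only [prefixSum_add, prefixSum_sub, prefixSum_eB] <;> split_ifs <;> omega

theorem exists_prefixSum_ne_zero {v : Fin n → ℤ} (hv : v ∈ PosB n) : ∃ k, prefixSum v k ≠ 0 := by
  rcases hv with ⟨i, rfl⟩ | ⟨i, j, hij, rfl⟩ | ⟨i, j, hij, rfl⟩ <;> refine ⟨i, ?_⟩ <;>
    simp only [prefixSum_add, prefixSum_sub, prefixSum_eB] <;> split_ifs <;> omega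

def simpleRootB (t : Fin n) : Fin n → ℤ :=
  if h : (t : ℕ) + 1 < n then eB n t - eB n ⟨t + 1, h⟩ else eB n t

theorem prefixSum_simpleRootB (t k : Fin n) :
    prefixSum (simpleRootB t) k = if k = t then 1 else 0 := by
  unfold simpleRootB
  split_ifs <;> simp only [prefixSum_sub, prefixSum_eB, Fin.le_def, Fin.ext_iff] at * <;>
    split_ifs <;> omega

theorem simpleRootB_mem_PosB (t : Fin n) : simpleRootB t ∈ PosB n := by
  unfold simpleRootB
  split_ifs with h
  · exact Or.inr (Or.inl ⟨t, ⟨t + 1, h⟩, Fin.lt_def.mpr (Nat.lt_succ_self _), rfl⟩)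
  · exact Or.inl ⟨t, rfl⟩

theorem simpleRootB_rleB {v : Fin n → ℤ} {t : Fin n} (hv : v ∈ PosB n)
    (ht : 1 ≤ prefixSum v t) : rleB n (simpleRootB t) v := by
  refine rleB_iff_prefixSum.mpr fun k => ?_
  rw [prefixSum_simpleRootB]
  split_ifs with hk
  · exact hk ▸ ht
  · exact prefixSum_nonneg hv k

theorem eq_simpleRootB_of_rleB {y : Fin n → ℤ} {t : Fin n} (hy : y ∈ PosB n)
    (hle : rleB n y (simpleRootB t)) : y = simpleRootB t := by
  have hbound (k : Fin n) : prefixSum y k ≤ if k = t then 1 else 0 :=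
    prefixSum_simpleRootB t k ▸ rleB_iff_prefixSum.mp hle k
  have hoff (k : Fin n) (hk : k ≠ t) : prefixSum y k = 0 :=
    le_antisymm (by simpa [hk] using hbound k) (prefixSum_nonneg hy k)
  obtain ⟨k, hk⟩ := exists_prefixSum_ne_zero hy
  obtain rfl : k = t := by_contra fun h => hk (hoff k h)
  have hk1 : prefixSum y k = 1 := by
    have := hbound k
    rw [if_pos rfl] at this
    have := prefixSum_nonneg hy k
    omega
  refine prefixSum_injective fun i => ?_
  rw [prefixSum_simpleRootB]
  split_ifs with hi
  · exact hi ▸ hk1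
  · exact hoff i hi

/-- The positive roots whose first nonzero prefix sum is at `t`. -/
def leadingRoots (t : Fin n) : Set (Fin n → ℤ) :=
  {v | v = eB n t ∨ ∃ j, t < j ∧ (v = eB n t - eB n j ∨ v = eB n t + eB n j)}

theorem mem_leadingRoots {v : Fin n → ℤ} {t : Fin n} (hv : v ∈ PosB n)
    (hlow : ∀ k : Fin n, k < t → prefixSum v k = 0) (ht : 1 ≤ prefixSum v t) :
    v ∈ leadingRoots t := by
  rcases hv with ⟨i, rfl⟩ | ⟨i, j, hij, rfl⟩ | ⟨i, j, hij, rfl⟩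
  all_goals
    obtain rfl : i = t := by
      rcases lt_trichotomy i t with hit | rfl | hti
      · have := hlow i hit
        simp only [prefixSum_add, prefixSum_sub, prefixSum_eB] at this
        split_ifs at this <;> omega
      · rfl
      · simp only [prefixSum_add, prefixSum_sub, prefixSum_eB] at ht
        split_ifs at ht <;> omega
  · exact Or.inl rfl
  · exact Or.inr ⟨j, hij, Or.inl rfl⟩
  · exact Or.inr ⟨j, hij, Or.inr rfl⟩

/-- In order: `eₜ - eⱼ` for increasing `j`, then `eₜ`, then `eₜ + eⱼ` for decreasing `j`. -/
theorem isChain_leadingRoots (t : Fin n) : IsChain (rleB n) (leadingRoots t) := by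
  rintro v hv w hw -
  simp only [rleB_iff_prefixSum]
  rcases hv with rfl | ⟨j, htj, rfl | rfl⟩ <;> rcases hw with rfl | ⟨j', htj', rfl | rfl⟩
  all_goals
    simp only [prefixSum_add, prefixSum_sub, prefixSum_eB]
    first
    | (left; intro k; split_ifs <;> omega)
    | (right; intro k; split_ifs <;> omega)
    | rcases le_total j j' with hjj' | hjj' <;>
        first
        | (left; intro k; split_ifs <;> omega)
        | (right; intro k; split_ifs <;> omega)

def vanishingBelow (n t : ℕ) : Set (Fin n → ℤ) :=
  {v | ∀ k : Fin n, (k : ℕ) < t → prefixSum v k = 0}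

theorem vanishingBelow_zero : vanishingBelow n 0 = Set.univ :=
  Set.eq_univ_of_forall fun _ _ hk => absurd hk (Nat.not_lt_zero _)

theorem PosB_inter_vanishingBelow_eq_empty {t : ℕ} (ht : n ≤ t) :
    PosB n ∩ vanishingBelow n t = ∅ := by
  refine Set.eq_empty_of_forall_notMem fun v ⟨hv, hvan⟩ => ?_
  obtain ⟨k, hk⟩ := exists_prefixSum_ne_zero hv
  exact hk (hvan k (by omega))

theorem chainPeelable_inter_vanishingBelow_of_succ {I : Set (Fin n → ℤ)} (hIP : I ⊆ PosB n)
    (hI : ∀ v ∈ I, ∀ w ∈ PosB n, rleB n w v → w ∈ I) {t : ℕ} (ht : t < n)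
    (hsucc : ChainPeelable (rleB n) (I ∩ vanishingBelow n (t + 1))) :
    ChainPeelable (rleB n) (I ∩ vanishingBelow n t) := by
  let τ : Fin n := ⟨t, ht⟩
  set s := I ∩ vanishingBelow n t
  set F := {v ∈ s | 1 ≤ prefixSum v τ}
  have hrest : s \ F = I ∩ vanishingBelow n (t + 1) := by
    ext v
    simp only [s, F, vanishingBelow, Set.mem_sdiff, Set.mem_inter_iff, Set.mem_ofPred_eq]
    constructor
    · rintro ⟨⟨hvI, hlow⟩, hlead⟩
      refine ⟨hvI, fun k hk => (Nat.lt_succ_iff_lt_or_eq.mp hk).elim (hlow k) fun hkt => ?_⟩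
      rw [show k = τ from Fin.ext hkt]
      have := prefixSum_nonneg (hIP hvI) τ
      have := not_le.mp fun h => hlead ⟨⟨hvI, hlow⟩, h⟩
      omega
    · rintro ⟨hvI, hlow⟩
      have := hlow τ (Nat.lt_succ_self t)
      exact ⟨⟨hvI, fun k hk => hlow k (Nat.lt_succ_of_lt hk)⟩, fun h => by omega⟩
  rcases F.eq_empty_or_nonempty with hFe | ⟨v₀, hv₀⟩
  · rw [hFe, Set.sdiff_empty] at hrest
    exact hrest ▸ hsucc
  have hα : simpleRootB τ ∈ F := by
    refine ⟨⟨hI v₀ hv₀.1.1 _ (simpleRootB_mem_PosB τ) (simpleRootB_rleB (hIP hv₀.1.1) hv₀.2),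
      fun k hk => ?_⟩, by simp [prefixSum_simpleRootB]⟩
    rw [prefixSum_simpleRootB, if_neg (Fin.ne_of_lt hk)]
  refine .peel s F (fun v hv => hv.1) ?_ ?_ ⟨simpleRootB τ, hα, ?_⟩ (hrest ▸ hsucc)
  · exact (isChain_leadingRoots τ).mono fun v hv =>
      mem_leadingRoots (hIP hv.1.1) (fun k hk => hv.1.2 k hk) hv.2
  · exact fun x hx y hy hxy => ⟨hy, hx.2.trans (hxy τ)⟩
  · exact fun y hy hyα => eq_simpleRootB_of_rleB (hIP hy.1) hyα

theorem chainPeelable_inter_vanishingBelow {I : Set (Fin n → ℤ)} (hIP : I ⊆ PosB n)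
    (hI : ∀ v ∈ I, ∀ w ∈ PosB n, rleB n w v → w ∈ I) (t : ℕ) :
    ChainPeelable (rleB n) (I ∩ vanishingBelow n t) := by
  induction hd : n - t generalizing t with
  | zero =>
    refine .chain _ (IsChain.mono (Set.inter_subset_inter_left _ hIP) ?_)
    rw [PosB_inter_vanishingBelow_eq_empty (by omega)]
    exact Set.pairwise_empty _
  | succ d ih =>
    exact chainPeelable_inter_vanishingBelow_of_succ hIP hI (by omega) (ih (t + 1) (by omega))

end TypeB

open TypeB in
theorem typeB_chainPeelable_general (n : ℕ) :
    ChainPeelable (rleB n) (PosB n) ∧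
    ∀ I ⊆ PosB n, (∀ v ∈ I, ∀ w ∈ PosB n, rleB n w v → w ∈ I) →
      ChainPeelable (rleB n) I := by
  have ideal (I : Set (Fin n → ℤ)) (hIP : I ⊆ PosB n)
      (hI : ∀ v ∈ I, ∀ w ∈ PosB n, rleB n w v → w ∈ I) : ChainPeelable (rleB n) I := by
    simpa [vanishingBelow_zero] using chainPeelable_inter_vanishingBelow hIP hI 0
  exact ⟨ideal _ subset_rfl fun _ _ _ hw _ => hw, ideal⟩

/-- The type Bₙ root poset (n ≥ 2) is chain peelable; consequently every order ideal of it
is chain peelable. -/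
theorem typeB_chainPeelable (n : ℕ) (hn : 2 ≤ n) :
    ChainPeelable (rleB n) (PosB n) ∧
    ∀ I ⊆ PosB n, (∀ v ∈ I, ∀ w ∈ PosB n, rleB n w v → w ∈ I) →
      ChainPeelable (rleB n) I :=
  typeB_chainPeelable_general n
end

section
/- In the type F₄ root poset, for every simple root α, the order filter F(α) = {γ ∈ Φ⁺ : γ ≥ α} generated by α in the ideal Î of all positive roots of height at most 4 is not a chain; consequently Î is not chain peelable. -/
/-- The ideal Î of positive roots of height at most 4 in the type F₄ root poset, recorded
by coordinates over the simple roots α₁, α₂, α₃, α₄ and ordered coordinatewise. -/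
def F4IdealHat : Set (Fin 4 → ℤ) :=
  {![1,0,0,0], ![0,1,0,0], ![0,0,1,0], ![0,0,0,1],
   ![1,1,0,0], ![0,1,1,0], ![0,0,1,1],
   ![1,1,1,0], ![0,2,1,0], ![0,1,1,1],
   ![1,2,1,0], ![1,1,1,1], ![0,2,1,1]}

section SumEq

variable {ι M : Type*} [Fintype ι] [AddCommMonoid M] [PartialOrder M] [IsOrderedCancelAddMonoid M]

theorem Pi.eq_of_le_of_sum_eq {x y : ι → M} (hxy : x ≤ y) (h : ∑ i, x i = ∑ i, y i) :
    x = y :=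
  funext fun i => (Finset.sum_eq_sum_iff_of_le fun i _ => hxy i).1 h i (Finset.mem_univ i)

theorem not_isChain_of_ne_of_sum_eq {s : Set (ι → M)} {x y : ι → M} (hx : x ∈ s) (hy : y ∈ s)
    (hne : x ≠ y) (h : ∑ i, x i = ∑ i, y i) : ¬ IsChain (· ≤ ·) s := fun hs =>
  (hs hx hy hne).elim (fun hxy => hne (Pi.eq_of_le_of_sum_eq hxy h))
    (fun hyx => hne (Pi.eq_of_le_of_sum_eq hyx h.symm).symm)

end SumEq

theorem exists_eq_single_of_minimal {ι : Type*} [DecidableEq ι] {s : Set (ι → ℤ)}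
    (hpos : ∀ x ∈ s, 0 < x) (hsingle : ∀ i, Pi.single i 1 ∈ s) {m : ι → ℤ} (hm : m ∈ s)
    (hmin : ∀ y ∈ s, y ≤ m → y = m) : ∃ i, m = Pi.single i 1 := by
  obtain ⟨hm_nonneg, i, hi⟩ := Pi.lt_def.1 (hpos m hm)
  have hle : Pi.single i 1 ≤ m :=
    update_le_iff.2 ⟨Order.one_le_iff_pos.2 hi, fun j _ => hm_nonneg j⟩
  exact ⟨i, (hmin _ (hsingle i) hle).symm⟩

theorem not_chainPeelable_of_forall_minimal_not_isChain {α : Type*} {r : α → α → Prop}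
    {s : Set α} (hs : ¬ IsChain r s)
    (hmin : ∀ m ∈ s, (∀ y ∈ s, r y m → y = m) → ¬ IsChain r {y ∈ s | r m y}) :
    ¬ ChainPeelable r s := by
  rintro (⟨_, hchain⟩ | ⟨_, F, hFs, hF, hup, ⟨m, hmF, hm⟩, -⟩)
  · exact hs hchain
  · exact hmin m (hFs hmF) hm (hF.mono fun y hy => hup m hmF y hy.1 hy.2)

theorem F4IdealHat_pos : ∀ x ∈ F4IdealHat, 0 < x := by
  simp only [F4IdealHat, Set.mem_insert_iff, Set.mem_singleton_iff, forall_eq_or_imp, forall_eq,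
    Pi.lt_def, Pi.le_def]
  decide

theorem single_mem_F4IdealHat (i : Fin 4) : Pi.single i 1 ∈ F4IdealHat := by
  simp only [F4IdealHat, Set.mem_insert_iff, Set.mem_singleton_iff]
  fin_cases i <;> decide

theorem F4_simpleRoots_eq_range_single :
    ({![1,0,0,0], ![0,1,0,0], ![0,0,1,0], ![0,0,0,1]} : Set (Fin 4 → ℤ)) =
      Set.range fun i => Pi.single i 1 := by
  ext x
  simp only [Set.mem_insert_iff, Set.mem_singleton_iff, Set.mem_range, Fin.exists_fin_succ,
    Fin.exists_fin_zero, or_false]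
  constructor <;> rintro (rfl | rfl | rfl | rfl) <;> decide

theorem F4IdealHat_exists_ne_sum_eq_above_single (i : Fin 4) :
    ∃ x ∈ F4IdealHat, ∃ y ∈ F4IdealHat,
      Pi.single i 1 ≤ x ∧ Pi.single i 1 ≤ y ∧ x ≠ y ∧ ∑ j, x j = ∑ j, y j := by
  fin_cases i <;> [refine ⟨![1,2,1,0], ?_, ![1,1,1,1], ?_, ?_⟩;
    refine ⟨![1,2,1,0], ?_, ![0,2,1,1], ?_, ?_⟩; refine ⟨![1,2,1,0], ?_, ![0,2,1,1], ?_, ?_⟩;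
    refine ⟨![1,1,1,1], ?_, ![0,2,1,1], ?_, ?_⟩]
  all_goals first | (simp only [Pi.le_def]; decide) | simp [F4IdealHat]

theorem F4IdealHat_not_isChain_upper_single (i : Fin 4) :
    ¬ IsChain (· ≤ ·) {γ ∈ F4IdealHat | Pi.single i 1 ≤ γ} := by
  obtain ⟨x, hx, y, hy, hix, hiy, hne, hsum⟩ := F4IdealHat_exists_ne_sum_eq_above_single i
  exact not_isChain_of_ne_of_sum_eq ⟨hx, hix⟩ ⟨hy, hiy⟩ hne hsum

/-- In the ideal Î of positive roots of height ≤ 4 in the type F₄ root poset, the order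
filter generated by each simple root is not a chain; consequently Î is not chain
peelable. -/
theorem F4_hat_not_chainPeelable :
    (∀ α ∈ ({![1,0,0,0], ![0,1,0,0], ![0,0,1,0], ![0,0,0,1]} : Set (Fin 4 → ℤ)),
      ¬ IsChain (· ≤ ·) {γ ∈ F4IdealHat | α ≤ γ}) ∧
    ¬ ChainPeelable (· ≤ ·) F4IdealHat := by
  rw [F4_simpleRoots_eq_range_single, Set.forall_mem_range]
  refine ⟨F4IdealHat_not_isChain_upper_single,
    not_chainPeelable_of_forall_minimal_not_isChain ?_ ?_⟩
  · exact fun h => F4IdealHat_not_isChain_upper_single 0 (h.mono (Set.sep_subset _ _))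
  · intro m hm hmin
    obtain ⟨i, rfl⟩ := exists_eq_single_of_minimal F4IdealHat_pos single_mem_F4IdealHat hm hmin
    exact F4IdealHat_not_isChain_upper_single i
end

section
/- Let Φ be a simply laced finite crystallographic root system and I ⊆ Φ⁺ a star ideal with roots γ₄ = α₁+α₂+α₃, γ₃ = α₁+α₂+α₄, γ₁ = α₂+α₃+α₄ as in the definition. Then the set S = {α₂, γ₁, γ₃, γ₄} is 2-closed in I but is not a flat of I, since α₁ = (1/2)(γ₃ + γ₄ − γ₁ − α₂) lies in span(S) ∩ I but not in S. Hence I, viewed as an arrangement of vectors, is not line-closed. -/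
open scoped RealInnerProductSpace

/-!
In a simply laced system the three sums `γ₄, γ₃, γ₁` being roots force the Dynkin diagram on
`α₁, …, α₄` to be the star centred at `α₂`, and then `α₂, γ₁, γ₃, γ₄` are pairwise orthogonal
roots of the same length. For two such roots `x, y` the crystallographic condition leaves only
`±x, ±y` as roots in `span {x, y}`, so `S` is 2-closed in any set of positive roots. Yet
`α₁ = ½ (γ₃ + γ₄ - γ₁ - α₂)` is a root of `I` in `span S` outside `S`.
-/

section Closure

variable {V : Type*} [AddCommGroup V] [Module ℝ V]

def IsTwoClosedIn (A S : Set V) : Prop :=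
  ∀ x ∈ S, ∀ y ∈ S, A ∩ (Submodule.span ℝ ({x, y} : Set V) : Set V) ⊆ S

def IsFlatIn (A S : Set V) : Prop :=
  A ∩ (Submodule.span ℝ S : Set V) = S

def IsLineClosed (A : Set V) : Prop :=
  ∀ T ⊆ A, IsTwoClosedIn A T → IsFlatIn A T

theorem not_isFlatIn_of_mem_span {A S : Set V} {v : V} (hvA : v ∈ A)
    (hv : v ∈ Submodule.span ℝ S) (hvS : v ∉ S) : ¬ IsFlatIn A S :=
  fun h => hvS (h ▸ ⟨hvA, hv⟩)

theorem not_isLineClosed_of_not_isFlatIn {A S : Set V} (hSA : S ⊆ A) (hS : IsTwoClosedIn A S)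
    (hflat : ¬ IsFlatIn A S) : ¬ IsLineClosed A :=
  fun h => hflat (h S hSA hS)

theorem mem_span_of_star (a b c d : V) :
    a ∈ Submodule.span ℝ ({b, b + c + d, a + b + d, a + b + c} : Set V) := by
  set S : Set V := {b, b + c + d, a + b + d, a + b + c}
  rw [show a = (1 / 2 : ℝ) • (a + b + d + (a + b + c) - (b + c + d) - b) by module]
  refine Submodule.smul_mem _ _ (sub_mem (sub_mem (add_mem ?_ ?_) ?_) ?_) <;>
    exact Submodule.subset_span (by simp [S])

end Closure

theorem List.Nodup.ne_of_four {α : Type*} {a b c d : α} (h : [a, b, c, d].Nodup) :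
    a ≠ b ∧ a ≠ c ∧ a ≠ d ∧ b ≠ c ∧ b ≠ d ∧ c ≠ d := by
  simp only [List.nodup_cons, List.mem_cons, List.not_mem_nil, List.nodup_nil, and_true, not_or,
    not_false_eq_true] at h
  tauto

theorem Int.eq_of_sq_add_sq_eq_four {n m : ℤ} (h : n ^ 2 + m ^ 2 = 4) :
    (n = 2 ∨ n = -2) ∧ m = 0 ∨ n = 0 ∧ (m = 2 ∨ m = -2) := by
  obtain ⟨hn₁, hn₂⟩ : -2 ≤ n ∧ n ≤ 2 := ⟨by nlinarith [sq_nonneg m], by nlinarith [sq_nonneg m]⟩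
  obtain ⟨hm₁, hm₂⟩ : -2 ≤ m ∧ m ≤ 2 := ⟨by nlinarith [sq_nonneg n], by nlinarith [sq_nonneg n]⟩
  interval_cases n <;> interval_cases m <;> simp_all

namespace RootSystemData

variable {V : Type*} [NormedAddCommGroup V] [InnerProductSpace ℝ V] (R : RootSystemData V)

theorem inner_self_pos_s18 {γ : V} (hγ : γ ∈ R.Φ) : 0 < ⟪γ, γ⟫ :=
  real_inner_self_pos.2 (R.nonzero γ hγ)

theorem exists_int_two_inner_eq {α β : V} (hα : α ∈ R.Φ) (hβ : β ∈ R.Φ) :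
    ∃ n : ℤ, 2 * ⟪α, β⟫ = n * ⟪α, α⟫ := by
  obtain ⟨n, hn⟩ := R.crystallographic α hα β hβ
  exact ⟨n, by rw [← hn, div_mul_cancel₀ _ (R.inner_self_pos_s18 hα).ne']⟩

theorem eq_or_eq_neg_of_smul_mem {x : V} (hx : x ∈ R.Φ) {t : ℝ} (ht : t • x ∈ R.Φ) :
    t • x = x ∨ t • x = -x := by
  rcases R.reduced x hx t ht with rfl | rfl <;> simp

variable {R}

theorem SimplyLaced.eq_of_mem_span_pair_of_inner_eq_zero (hSL : R.SimplyLaced) {x y δ : V}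
    (hx : x ∈ R.Φ) (hy : y ∈ R.Φ) (hδ : δ ∈ R.Φ) (hxy : ⟪x, y⟫ = 0) {a c : ℝ}
    (h : a • x + c • y = δ) : δ = x ∨ δ = -x ∨ δ = y ∨ δ = -y := by
  have hN0 : ⟪x, x⟫ ≠ 0 := (R.inner_self_pos_s18 hx).ne'
  have hyy : ⟪y, y⟫ = ⟪x, x⟫ := hSL y hy x hx
  have hyx : ⟪y, x⟫ = 0 := by rwa [real_inner_comm]
  have hxδ : ⟪x, δ⟫ = a * ⟪x, x⟫ := by
    simp only [← h, inner_add_right, real_inner_smul_right, hxy, mul_zero, add_zero]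
  have hyδ : ⟪y, δ⟫ = c * ⟪x, x⟫ := by
    simp only [← h, inner_add_right, real_inner_smul_right, hyx, hyy, mul_zero, zero_add]
  have hac : a ^ 2 + c ^ 2 = 1 := by
    have hδδ := hSL δ hδ x hx
    simp only [← h, inner_add_left, inner_add_right, real_inner_smul_left,
      real_inner_smul_right, hxy, hyx, hyy] at hδδ
    exact mul_right_cancel₀ hN0 (by linear_combination hδδ)
  obtain ⟨n, hn⟩ := R.exists_int_two_inner_eq hx hδ
  obtain ⟨m, hm⟩ := R.exists_int_two_inner_eq hy hδ
  have ha : 2 * a = n := mul_right_cancel₀ hN0 (by linear_combination hn - 2 * hxδ)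
  have hc : 2 * c = m := mul_right_cancel₀ hN0 (by linear_combination hm - 2 * hyδ + m * hyy)
  have hnm : n ^ 2 + m ^ 2 = 4 := by
    exact_mod_cast (show (n : ℝ) ^ 2 + m ^ 2 = 4 by rw [← ha, ← hc]; linear_combination 4 * hac)
  obtain rfl : a = n / 2 := by linarith
  obtain rfl : c = m / 2 := by linarith
  rcases Int.eq_of_sq_add_sq_eq_four hnm with ⟨rfl | rfl, rfl⟩ | ⟨rfl, rfl | rfl⟩ <;>
    norm_num [← h]

theorem SimplyLaced.inner_add_add_of_mem (hSL : R.SimplyLaced) {x y z : V}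
    (hx : x ∈ R.Φ) (hy : y ∈ R.Φ) (hz : z ∈ R.Φ) (h : x + y + z ∈ R.Φ) :
    ⟪x, y⟫ + ⟪x, z⟫ + ⟪y, z⟫ = -⟪x, x⟫ := by
  have hsum := hSL _ h x hx
  simp only [inner_add_left, inner_add_right, real_inner_comm x y, real_inner_comm x z,
    real_inner_comm y z, hSL y hy x hx, hSL z hz x hx] at hsum
  linarith

end RootSystemData

namespace RootBase

variable {V : Type*} [NormedAddCommGroup V] [InnerProductSpace ℝ V]
  {R : RootSystemData V} {ι : Type*} [Fintype ι] (B : RootBase R ι)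

theorem not_isPos_neg {x : V} (hx : B.IsPos x) : ¬ B.IsPos (-x) := by
  intro hnx
  refine R.nonzero x hx.1 (B.b.repr.map_eq_zero_iff.1 (Finsupp.ext fun i => ?_))
  have hi := hnx.2 i
  rw [map_neg, Finsupp.neg_apply, neg_nonneg] at hi
  exact le_antisymm hi (hx.2 i)

theorem isPos_simple (i : ι) : B.IsPos (B.b i) :=
  ⟨B.simple_mem i, by rw [B.b.repr_self]; exact Finsupp.single_nonneg.2 zero_le_one⟩

theorem simple_sub_simple_not_mem {i j : ι} (hij : i ≠ j) : B.b i - B.b j ∉ R.Φ := by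
  intro h
  rcases B.coord_sign _ h with hs | hs
  · have := hs j
    norm_num [Finsupp.single_apply, hij] at this
  · have := hs i
    norm_num [Finsupp.single_apply, hij] at this

theorem simple_mem_of_one_le_repr {I : Set V} (hI : I ⊆ B.Pos)
    (hideal : ∀ γ ∈ I, ∀ δ, B.IsPos δ → B.rle δ γ → δ ∈ I) {γ : V} (hγ : γ ∈ I) {i : ι}
    (hi : 1 ≤ B.b.repr γ i) : B.b i ∈ I := by
  classical
  refine hideal γ hγ _ (B.isPos_simple i) fun j => ?_
  rw [B.b.repr_self, Finsupp.single_apply]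
  split_ifs with hij
  · exact hij ▸ hi
  · exact (hI hγ).2 j

variable {B}

theorem two_inner_simple_eq (hSL : R.SimplyLaced) {i j : ι} (hij : i ≠ j) :
    2 * ⟪B.b i, B.b j⟫ = 0 ∨ 2 * ⟪B.b i, B.b j⟫ = -⟪B.b i, B.b i⟫ := by
  set N := ⟪B.b i, B.b i⟫
  have hN : 0 < N := R.inner_self_pos_s18 (B.simple_mem i)
  have hjj : ⟪B.b j, B.b j⟫ = N := hSL _ (B.simple_mem j) _ (B.simple_mem i)
  have hsub : 0 < ⟪B.b i - B.b j, B.b i - B.b j⟫ :=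
    real_inner_self_pos.2 (sub_ne_zero.2 (B.b.injective.ne hij))
  have hadd : 0 < ⟪B.b i + B.b j, B.b i + B.b j⟫ := by
    refine real_inner_self_pos.2 fun h => ?_
    simpa [Finsupp.single_apply, hij] using congrArg (fun v => B.b.repr v i) h
  rw [real_inner_sub_sub_self, hjj] at hsub
  rw [real_inner_add_add_self, hjj] at hadd
  -- `‖αᵢ ± αⱼ‖² > 0` leaves the Cartan integer in `{-1, 0, 1}`, and `1` would make the
  -- reflection `αⱼ - αᵢ` a root.
  obtain ⟨n, hn⟩ := R.exists_int_two_inner_eq (B.simple_mem i) (B.simple_mem j)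
  have hn₁ : -2 < n := by exact_mod_cast (show (-2 : ℝ) < n by nlinarith)
  have hn₂ : n < 2 := by exact_mod_cast (show (n : ℝ) < 2 by nlinarith)
  obtain rfl | rfl | rfl : n = -1 ∨ n = 0 ∨ n = 1 := by omega
  · right; rw [hn]; push_cast; ring
  · left; rw [hn]; push_cast; ring
  · have hrefl := R.reflect_mem _ (B.simple_mem i) _ (B.simple_mem j)
    rw [hn, Int.cast_one, one_mul, div_self hN.ne', one_smul] at hrefl
    exact absurd hrefl (B.simple_sub_simple_not_mem hij.symm)

theorem isTwoClosedIn_of_pairwise_inner_eq_zero (hSL : R.SimplyLaced) {A S : Set V}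
    (hA : A ⊆ B.Pos) (hS : S ⊆ B.Pos) (horth : S.Pairwise fun x y => ⟪x, y⟫ = 0) :
    IsTwoClosedIn A S := by
  rintro x hx y hy δ ⟨hδA, hδ⟩
  obtain ⟨a, c, h⟩ := Submodule.mem_span_pair.1 hδ
  have hδpos : B.IsPos δ := hA hδA
  have hcases : δ = x ∨ δ = -x ∨ δ = y ∨ δ = -y := by
    by_cases hxy : x = y
    · subst hxy
      rw [← add_smul] at h
      subst h
      rcases R.eq_or_eq_neg_of_smul_mem (hS hx).1 hδpos.1 with h | h <;> simp [h]
    · exact hSL.eq_of_mem_span_pair_of_inner_eq_zero (hS hx).1 (hS hy).1 hδpos.1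
        (horth hx hy hxy) h
  rcases hcases with rfl | rfl | rfl | rfl
  · exact hx
  · exact absurd hδpos (B.not_isPos_neg (hS hx))
  · exact hy
  · exact absurd hδpos (B.not_isPos_neg (hS hy))

theorem star_inner_eq (hSL : R.SimplyLaced) {i₁ i₂ i₃ i₄ : ι}
    (hnd : [i₁, i₂, i₃, i₄].Nodup) (h₄ : B.b i₁ + B.b i₂ + B.b i₃ ∈ R.Φ)
    (h₃ : B.b i₁ + B.b i₂ + B.b i₄ ∈ R.Φ) (h₁ : B.b i₂ + B.b i₃ + B.b i₄ ∈ R.Φ) :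
    2 * ⟪B.b i₁, B.b i₂⟫ = -⟪B.b i₂, B.b i₂⟫ ∧ 2 * ⟪B.b i₂, B.b i₃⟫ = -⟪B.b i₂, B.b i₂⟫ ∧
      2 * ⟪B.b i₂, B.b i₄⟫ = -⟪B.b i₂, B.b i₂⟫ ∧
      ⟪B.b i₁, B.b i₃⟫ = 0 ∧ ⟪B.b i₁, B.b i₄⟫ = 0 ∧ ⟪B.b i₃, B.b i₄⟫ = 0 := by
  obtain ⟨h12, h13, h14, h23, h24, h34⟩ := hnd.ne_of_four
  set N := ⟪B.b i₂, B.b i₂⟫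
  have hnorm : ∀ i, ⟪B.b i, B.b i⟫ = N := fun i => hSL _ (B.simple_mem i) _ (B.simple_mem i₂)
  have hcartan : ∀ {i j}, i ≠ j → 2 * ⟪B.b i, B.b j⟫ = 0 ∨ 2 * ⟪B.b i, B.b j⟫ = -N :=
    fun hij => hnorm _ ▸ two_inner_simple_eq hSL hij
  have hsimple := B.simple_mem
  have E₄ := hSL.inner_add_add_of_mem (hsimple _) (hsimple _) (hsimple _) h₄
  have E₃ := hSL.inner_add_add_of_mem (hsimple _) (hsimple _) (hsimple _) h₃
  have E₁ := hSL.inner_add_add_of_mem (hsimple _) (hsimple _) (hsimple _) h₁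
  have hsum : 0 < ⟪B.b i₁ + B.b i₂ + B.b i₃ + B.b i₄, B.b i₁ + B.b i₂ + B.b i₃ + B.b i₄⟫ := by
    refine real_inner_self_pos.2 fun h => ?_
    simpa [Finsupp.single_apply, h12, h13, h14] using congrArg (fun v => B.b.repr v i₁) h
  simp only [inner_add_left, inner_add_right, hnorm, real_inner_comm (B.b i₁),
    real_inner_comm (B.b i₂) (B.b i₃), real_inner_comm (B.b i₂) (B.b i₄),
    real_inner_comm (B.b i₃) (B.b i₄)] at hsum E₄ E₃ E₁
  have hN : 0 < N := R.inner_self_pos_s18 (hsimple i₂)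
  have hbound : ∀ {i j}, i ≠ j → -N ≤ 2 * ⟪B.b i, B.b j⟫ ∧ 2 * ⟪B.b i, B.b j⟫ ≤ 0 := fun hij =>
    (hcartan hij).elim (fun h => ⟨by linarith, by linarith⟩) (fun h => ⟨by linarith, by linarith⟩)
  obtain ⟨b13, b13'⟩ := hbound h13
  obtain ⟨b14, b14'⟩ := hbound h14
  obtain ⟨b34, b34'⟩ := hbound h34
  -- Each triple sum being a root puts two of its three edges in the Dynkin diagram, while
  -- `‖α₁ + α₂ + α₃ + α₄‖² > 0` allows at most three edges: these are the three edges at `i₂`.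
  have hcentre : 2 * ⟪B.b i₁, B.b i₂⟫ = -N ∧ 2 * ⟪B.b i₂, B.b i₃⟫ = -N ∧
      2 * ⟪B.b i₂, B.b i₄⟫ = -N := by
    rcases hcartan h12 with h12 | h12 <;> rcases hcartan h23 with h23 | h23 <;>
      rcases hcartan h24 with h24 | h24 <;>
      first | exact ⟨h12, h23, h24⟩ | (exfalso; linarith)
  obtain ⟨c12, c23, c24⟩ := hcentre
  exact ⟨c12, c23, c24, by linarith, by linarith, by linarith⟩

theorem pairwise_inner_eq_zero_of_star (hSL : R.SimplyLaced) {i₁ i₂ i₃ i₄ : ι}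
    (hnd : [i₁, i₂, i₃, i₄].Nodup) (h₄ : B.b i₁ + B.b i₂ + B.b i₃ ∈ R.Φ)
    (h₃ : B.b i₁ + B.b i₂ + B.b i₄ ∈ R.Φ) (h₁ : B.b i₂ + B.b i₃ + B.b i₄ ∈ R.Φ) :
    ({B.b i₂, B.b i₂ + B.b i₃ + B.b i₄, B.b i₁ + B.b i₂ + B.b i₄, B.b i₁ + B.b i₂ + B.b i₃} :
      Set V).Pairwise fun x y => ⟪x, y⟫ = 0 := by
  obtain ⟨c12, c23, c24, o13, o14, o34⟩ := star_inner_eq hSL hnd h₄ h₃ h₁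
  have hnorm : ∀ i, ⟪B.b i, B.b i⟫ = ⟪B.b i₂, B.b i₂⟫ := fun i =>
    hSL _ (B.simple_mem i) _ (B.simple_mem i₂)
  rintro x (rfl | rfl | rfl | rfl) y (rfl | rfl | rfl | rfl) hxy <;>
    first
    | exact absurd rfl hxy
    | (simp only [inner_add_left, inner_add_right, hnorm, real_inner_comm (B.b i₁),
        real_inner_comm (B.b i₂) (B.b i₃), real_inner_comm (B.b i₂) (B.b i₄),
        real_inner_comm (B.b i₃) (B.b i₄)]
       linarith)

theorem simple_not_mem_star {i₁ i₂ i₃ i₄ : ι} (hnd : [i₁, i₂, i₃, i₄].Nodup) :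
    B.b i₁ ∉ ({B.b i₂, B.b i₂ + B.b i₃ + B.b i₄, B.b i₁ + B.b i₂ + B.b i₄,
      B.b i₁ + B.b i₂ + B.b i₃} : Set V) := by
  obtain ⟨h12, -, -, h23, h24, -⟩ := hnd.ne_of_four
  -- every element of the set has `i₂`-coordinate `1`
  rintro (h | h | h | h) <;>
    simpa [Finsupp.single_apply, h12, h23, Ne.symm h24] using congrArg (fun v => B.b.repr v i₂) h

end RootBase

/-- In a simply laced root system, a star ideal I is not line-closed: the set
S = {α₂, γ₁, γ₃, γ₄} is 2-closed in I but not a flat, since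
α₁ = (1/2)(γ₃ + γ₄ - γ₁ - α₂) lies in I ∩ span S but not in S. -/
theorem star_ideal_not_line_closed {V : Type*} [NormedAddCommGroup V] [InnerProductSpace ℝ V]
    {ι : Type*} [Fintype ι] (R : RootSystemData V) (B : RootBase R ι)
    (hSL : R.SimplyLaced)
    (I : Set V) (hI : I ⊆ B.Pos)
    (hideal : ∀ γ ∈ I, ∀ δ, B.IsPos δ → B.rle δ γ → δ ∈ I)
    (i₁ i₂ i₃ i₄ : ι) (hnd : ([i₁, i₂, i₃, i₄] : List ι).Nodup)
    (γ₁ γ₃ γ₄ : V)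
    (hγ₄ : γ₄ = B.b i₁ + B.b i₂ + B.b i₃) (hγ₃ : γ₃ = B.b i₁ + B.b i₂ + B.b i₄)
    (hγ₁ : γ₁ = B.b i₂ + B.b i₃ + B.b i₄)
    (hγ₄I : γ₄ ∈ R.Φ ∩ I) (hγ₃I : γ₃ ∈ R.Φ ∩ I) (hγ₁I : γ₁ ∈ R.Φ ∩ I)
    (S : Set V) (hS : S = {B.b i₂, γ₁, γ₃, γ₄}) :
    (∀ x ∈ S, ∀ y ∈ S, I ∩ (Submodule.span ℝ ({x, y} : Set V) : Set V) ⊆ S) ∧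
    B.b i₁ = (1 / 2 : ℝ) • (γ₃ + γ₄ - γ₁ - B.b i₂) ∧
    B.b i₁ ∈ I ∩ (Submodule.span ℝ S : Set V) ∧ B.b i₁ ∉ S ∧
    ¬ (I ∩ (Submodule.span ℝ S : Set V) = S) ∧
    ¬ (∀ T ⊆ I, (∀ x ∈ T, ∀ y ∈ T, I ∩ (Submodule.span ℝ ({x, y} : Set V) : Set V) ⊆ T) →
        I ∩ (Submodule.span ℝ T : Set V) = T) := by
  subst hγ₁ hγ₃ hγ₄
  obtain ⟨h12, h13, -, h23, -, -⟩ := hnd.ne_of_four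
  have hα₁ : B.b i₁ ∈ I := B.simple_mem_of_one_le_repr hI hideal hγ₄I.2 (by simp [h12, h13])
  have hα₂ : B.b i₂ ∈ I := B.simple_mem_of_one_le_repr hI hideal hγ₄I.2 (by simp [h12, h23])
  have hSI : S ⊆ I := by
    rw [hS]
    rintro x (rfl | rfl | rfl | rfl)
    exacts [hα₂, hγ₁I.2, hγ₃I.2, hγ₄I.2]
  have hclosed : IsTwoClosedIn I S :=
    RootBase.isTwoClosedIn_of_pairwise_inner_eq_zero hSL hI (hSI.trans hI)
      (hS ▸ RootBase.pairwise_inner_eq_zero_of_star hSL hnd hγ₄I.1 hγ₃I.1 hγ₁I.1)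
  have hspan : B.b i₁ ∈ Submodule.span ℝ S := hS ▸ mem_span_of_star _ _ _ _
  have hnotS : B.b i₁ ∉ S := hS ▸ RootBase.simple_not_mem_star hnd
  have hflat := not_isFlatIn_of_mem_span hα₁ hspan hnotS
  exact ⟨hclosed, by module, ⟨hα₁, hspan⟩, hnotS, hflat,
    not_isLineClosed_of_not_isFlatIn hSI hclosed hflat⟩
end

section
/- In the type D₄ root poset with simple roots α₁, α₃, α₄ the leaves and α₂ the central node, the order ideal I consisting of all positive roots of height at most 3 contains the three pairwise incomparable roots α₁+α₂+α₃, α₁+α₂+α₄, α₂+α₃+α₄, each of which generates an order filter of I that is not a chain; consequently I is not chain peelable. -/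
/-- The ideal of positive roots of height at most 3 in the type D₄ root poset, recorded by
coordinates over the simple roots α₁, α₂, α₃, α₄ (α₂ the central node) and ordered
coordinatewise. -/
def D4Ideal : Set (Fin 4 → ℤ) :=
  {![1,0,0,0], ![0,1,0,0], ![0,0,1,0], ![0,0,0,1],
   ![1,1,0,0], ![0,1,1,0], ![0,1,0,1],
   ![1,1,1,0], ![1,1,0,1], ![0,1,1,1]}

/-!
A chain-peeling step removes a chain order filter through a minimal element `m`, and such a
filter contains the whole principal filter of `m`; so some minimal element of a chain peelable
poset that is not itself a chain has a chain as principal filter. In the D₄ ideal the minimal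
elements are the simple roots, and each simple root lies below two of the three pairwise
incomparable roots of height 3.
-/

theorem IsAntichain.not_isChain_of_mem {α : Type*} {r : α → α → Prop} {s t : Set α}
    (ht : IsAntichain r t) {a b : α} (hat : a ∈ t) (hbt : b ∈ t) (hab : a ≠ b)
    (has : a ∈ s) (hbs : b ∈ s) : ¬ IsChain r s :=
  fun hs => (hs has hbs hab).elim (ht hat hbt hab) (ht hbt hat hab.symm)

theorem ChainPeelable.isChain_or_exists_minimal_isChain {α : Type*} {r : α → α → Prop}
    {s : Set α} (h : ChainPeelable r s) :
    IsChain r s ∨ ∃ m ∈ s, (∀ y ∈ s, r y m → y = m) ∧ IsChain r {y ∈ s | r m y} := by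
  cases h with
  | chain _ hs => exact .inl hs
  | peel _ F hFs hchain hfilter hmin _ =>
    obtain ⟨m, hmF, hm⟩ := hmin
    exact .inr ⟨m, hFs hmF, hm, hchain.mono fun y hy => hfilter m hmF y hy.1 hy.2⟩

local notation "simpleRootsD4" =>
  ({![1,0,0,0], ![0,1,0,0], ![0,0,1,0], ![0,0,0,1]} : Set (Fin 4 → ℤ))

local notation "heightThreeRootsD4" =>
  ({![1,1,1,0], ![1,1,0,1], ![0,1,1,1]} : Set (Fin 4 → ℤ))

theorem simpleRootsD4_subset_D4Ideal : simpleRootsD4 ⊆ D4Ideal := by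
  simp [D4Ideal, Set.insert_subset_iff]

theorem heightThreeRootsD4_subset_D4Ideal : heightThreeRootsD4 ⊆ D4Ideal := by
  simp [D4Ideal, Set.insert_subset_iff]

theorem isAntichain_heightThreeRootsD4 : IsAntichain (· ≤ ·) heightThreeRootsD4 := by
  simp only [IsAntichain, Set.Pairwise, Set.mem_insert_iff, Set.mem_singleton_iff,
    forall_eq_or_imp, forall_eq, Pi.le_def, Pi.compl_apply, compl_iff_not]
  decide

theorem exists_simpleRootsD4_le {m : Fin 4 → ℤ} (hm : m ∈ D4Ideal) :
    ∃ α ∈ simpleRootsD4, α ≤ m := by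
  revert m
  simp only [D4Ideal, Set.mem_insert_iff, Set.mem_singleton_iff, forall_eq_or_imp, forall_eq,
    exists_eq_or_imp, exists_eq_left, Pi.le_def]
  decide

theorem exists_two_heightThreeRootsD4_ge {α : Fin 4 → ℤ} (hα : α ∈ simpleRootsD4) :
    ∃ γ ∈ heightThreeRootsD4, ∃ γ' ∈ heightThreeRootsD4, γ ≠ γ' ∧ α ≤ γ ∧ α ≤ γ' := by
  simp only [Set.mem_insert_iff, Set.mem_singleton_iff, exists_eq_or_imp, exists_eq_left,
    Pi.le_def] at hα ⊢
  rcases hα with rfl | rfl | rfl | rfl <;> decide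

theorem not_isChain_D4Ideal_principalFilter {α : Fin 4 → ℤ} (hα : α ∈ simpleRootsD4) :
    ¬ IsChain (· ≤ ·) {γ ∈ D4Ideal | α ≤ γ} := by
  obtain ⟨γ, hγ, γ', hγ', hne, hαγ, hαγ'⟩ := exists_two_heightThreeRootsD4_ge hα
  exact isAntichain_heightThreeRootsD4.not_isChain_of_mem hγ hγ' hne
    ⟨heightThreeRootsD4_subset_D4Ideal hγ, hαγ⟩ ⟨heightThreeRootsD4_subset_D4Ideal hγ', hαγ'⟩

theorem not_isChain_D4Ideal : ¬ IsChain (· ≤ ·) D4Ideal :=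
  fun h => not_isChain_D4Ideal_principalFilter (α := ![0,1,0,0]) (by simp)
    (h.mono fun _ hγ => hγ.1)

/-- The ideal I of positive roots of height ≤ 3 in the type D₄ root poset contains the
three pairwise incomparable roots α₁+α₂+α₃, α₁+α₂+α₄, α₂+α₃+α₄; the order filter of I
generated by each simple (minimal) root is not a chain; consequently I is not chain
peelable. -/
theorem D4_ideal_not_chainPeelable :
    (![1,1,1,0] ∈ D4Ideal ∧ ![1,1,0,1] ∈ D4Ideal ∧ ![0,1,1,1] ∈ D4Ideal) ∧
    (∀ γ ∈ ({![1,1,1,0], ![1,1,0,1], ![0,1,1,1]} : Set (Fin 4 → ℤ)),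
      ∀ γ' ∈ ({![1,1,1,0], ![1,1,0,1], ![0,1,1,1]} : Set (Fin 4 → ℤ)),
        γ ≠ γ' → ¬ γ ≤ γ' ∧ ¬ γ' ≤ γ) ∧
    (∀ α ∈ ({![1,0,0,0], ![0,1,0,0], ![0,0,1,0], ![0,0,0,1]} : Set (Fin 4 → ℤ)),
      ¬ IsChain (· ≤ ·) {γ ∈ D4Ideal | α ≤ γ}) ∧
    ¬ ChainPeelable (· ≤ ·) D4Ideal := by
  have hsub := heightThreeRootsD4_subset_D4Ideal
  refine ⟨⟨hsub (by simp), hsub (by simp), hsub (by simp)⟩,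
    fun γ hγ γ' hγ' hne => ⟨isAntichain_heightThreeRootsD4 hγ hγ' hne,
      isAntichain_heightThreeRootsD4 hγ' hγ hne.symm⟩,
    fun α hα => not_isChain_D4Ideal_principalFilter hα, fun hP => ?_⟩
  rcases hP.isChain_or_exists_minimal_isChain with hchain | ⟨m, hm, hmin, hchain⟩
  · exact not_isChain_D4Ideal hchain
  · obtain ⟨α, hα, hαm⟩ := exists_simpleRootsD4_le hm
    obtain rfl := hmin α (simpleRootsD4_subset_D4Ideal hα) hαm
    exact not_isChain_D4Ideal_principalFilter hα hchain
end
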